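/- arXiv:1808.09137 — 8 statements merged into one kernel-verified Lean document; each statement's English description precedes it below -/
import Mathlib

section
/- The deterministic forward–backward system μ'(t) = −w_t^{−2}·h(t), h'(t) = 0 on [0,T] with boundary conditions μ(0) = 0 and h(T) = g(μ(T)) has exactly three solutions, namely (μ(t), h(t)) = (−A·k_t, A) for A ∈ {−1, 0, 1}. -/
/-!
Since `h' = 0`, `h` is a constant `A`, and then `μ(0) = 0` forces `μ = -A·k`. The terminal
condition becomes the scalar equation `A = g(-A·k_T)`. Because `k_T = ∫_0^δ w⁻² + r_δ > r_δ > 0`,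
the linear branch of `g` only admits `A = 0`, and the saturated branch gives `A = sign A`, so
`A ∈ {-1, 1}`.
-/

open Set MeasureTheory intervalIntegral

section Calculus

variable {E : Type*} [NormedAddCommGroup E] [NormedSpace ℝ E] {a b : ℝ}

theorem hasDerivWithinAt_integral_Icc [CompleteSpace E] {f : ℝ → E} (hf : ContinuousOn f (Icc a b))
    {t : ℝ} (ht : t ∈ Icc a b) :
    HasDerivWithinAt (fun u => ∫ x in a..u, f x) (f t) (Icc a b) t := by
  have : Fact (t ∈ Icc a b) := ⟨ht⟩
  exact integral_hasDerivWithinAt_right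
    ((hf.mono (uIcc_subset_Icc (left_mem_Icc.2 (ht.1.trans ht.2)) ht)).intervalIntegrable)
    (hf.stronglyMeasurableAtFilter_nhdsWithin measurableSet_Icc t) (hf t ht)

theorem eqOn_Icc_of_hasDerivWithinAt_eq {f g f' : ℝ → E}
    (hf : ∀ t ∈ Icc a b, HasDerivWithinAt f (f' t) (Icc a b) t)
    (hg : ∀ t ∈ Icc a b, HasDerivWithinAt g (f' t) (Icc a b) t) (ha : f a = g a) :
    EqOn f g (Icc a b) :=
  eq_of_has_deriv_right_eq
    (fun t ht => (hf t (Ico_subset_Icc_self ht)).mono_of_mem_nhdsWithin (Icc_mem_nhdsGE_of_mem ht))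
    (fun t ht => (hg t (Ico_subset_Icc_self ht)).mono_of_mem_nhdsWithin (Icc_mem_nhdsGE_of_mem ht))
    (fun t ht => (hf t ht).continuousWithinAt) (fun t ht => (hg t ht).continuousWithinAt) ha

theorem continuousOn_exp_integral_Icc {f : ℝ → ℝ} (hab : a ≤ b) (hf : ContinuousOn f (Icc a b)) :
    ContinuousOn (fun t => Real.exp (∫ s in t..b, f s)) (Icc a b) := by
  have := continuousOn_primitive_interval_left (μ := volume)
    ((uIcc_of_le hab).symm ▸ hf.integrableOn_Icc)
  rw [uIcc_of_le hab] at this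
  exact Real.continuous_exp.comp_continuousOn this

theorem integral_lt_integral_of_pos_of_lt {f : ℝ → ℝ} {c : ℝ} (hf : ContinuousOn f (Icc a c))
    (hpos : ∀ x ∈ Icc a c, 0 < f x) (hab : a < b) (hbc : b ≤ c) :
    ∫ x in b..c, f x < ∫ x in a..c, f x := by
  have hac : a ≤ c := hab.le.trans hbc
  have hb : b ∈ Icc a c := ⟨hab.le, hbc⟩
  have hint : ∀ x ∈ Icc a c, ∀ y ∈ Icc a c, IntervalIntegrable f volume x y :=
    fun x hx y hy => (hf.mono (uIcc_subset_Icc hx hy)).intervalIntegrable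
  rw [← integral_add_adjacent_intervals (hint a (left_mem_Icc.2 hac) b hb)
    (hint b hb c (right_mem_Icc.2 hac))]
  linarith [intervalIntegral_pos_of_pos_on (hint a (left_mem_Icc.2 hac) b hb)
    (fun x hx => hpos x ⟨hx.1.le, hx.2.le.trans hbc⟩) hab]

end Calculus

theorem eq_neg_mul_primitive_of_hasDerivWithinAt {a b : ℝ} (hab : a ≤ b) {F k μ h : ℝ → ℝ}
    (hk : ∀ t ∈ Icc a b, HasDerivWithinAt k (F t) (Icc a b) t) (hka : k a = 0)
    (hμ : ∀ t ∈ Icc a b, HasDerivWithinAt μ (-F t * h t) (Icc a b) t)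
    (hh : ∀ t ∈ Icc a b, HasDerivWithinAt h 0 (Icc a b) t) (hμa : μ a = 0) :
    ∀ t ∈ Icc a b, μ t = -h b * k t ∧ h t = h b := by
  have hconst : EqOn h (fun _ => h a) (Icc a b) :=
    eqOn_Icc_of_hasDerivWithinAt_eq hh (fun t _ => hasDerivWithinAt_const t _ _) rfl
  have hhb : ∀ t ∈ Icc a b, h t = h b := fun t ht =>
    (hconst ht).trans (hconst (right_mem_Icc.2 hab)).symm
  have hμk : EqOn μ (fun t => -h b * k t) (Icc a b) := by
    refine eqOn_Icc_of_hasDerivWithinAt_eq (f' := fun t => -F t * h b) (fun t ht => ?_)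
      (fun t ht => ?_) (by simp [hμa, hka])
    · simpa only [hhb t ht] using hμ t ht
    · simpa only [mul_comm, neg_mul, mul_neg] using (hk t ht).const_mul (-h b)
  exact fun t ht => ⟨hμk ht, hhb t ht⟩

noncomputable def negClip (ρ x : ℝ) : ℝ :=
  if |x| ≤ ρ then -x / ρ else -Real.sign x

theorem eq_negClip_neg_mul_iff {ρ K A : ℝ} (hρ : 0 < ρ) (hρK : ρ < K) :
    A = negClip ρ (-A * K) ↔ A ∈ ({-1, 0, 1} : Set ℝ) := by
  have hK : 0 < K := hρ.trans hρK
  simp only [negClip, mem_insert_iff, mem_singleton_iff]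
  constructor
  · intro hA
    split_ifs at hA with hlin
    · rw [eq_div_iff hρ.ne'] at hA
      have : A * (K - ρ) = 0 := by linarith
      exact Or.inr (Or.inl ((mul_eq_zero.1 this).resolve_right (sub_ne_zero.2 hρK.ne')))
    · rcases lt_trichotomy A 0 with hA0 | rfl | hA0
      · rw [Real.sign_of_pos (by nlinarith)] at hA
        exact Or.inl hA
      · simp [hρ.le] at hlin
      · rw [Real.sign_of_neg (by nlinarith)] at hA
        exact Or.inr (Or.inr (by linarith))
  · rintro (rfl | rfl | rfl)
    · rw [if_neg (by simp [abs_of_pos hK, hρK]), neg_neg, one_mul, Real.sign_of_pos hK]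
    · simp [hρ.le]
    · rw [if_neg (by simp [abs_of_pos hK, hρK]), neg_one_mul, Real.sign_of_neg (neg_neg_of_pos hK)]
      norm_num

theorem fbsde_no_common_noise_three_solutions_general
    (T κ δ : ℝ) (hδ : δ ∈ Set.Ioo 0 T)
    (η w r k g : ℝ → ℝ)
    (hη : ∀ t ∈ Set.Icc (0:ℝ) T,
      HasDerivWithinAt η (η t ^ 2 - 2 * κ * η t - 1) (Set.Icc (0:ℝ) T) t)
    (hw : ∀ t, w t = Real.exp (∫ s in t..T, (-κ + η s)))
    (hr : ∀ t, r t = ∫ s in t..T, ((w s) ^ 2)⁻¹)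
    (hk : ∀ t, k t = ∫ s in (0:ℝ)..t, ((w s) ^ 2)⁻¹)
    (hg : ∀ x, g x = if |x| ≤ r δ then -x / r δ else -Real.sign x) :
    (∀ A ∈ ({-1, 0, 1} : Set ℝ),
      (∀ t ∈ Set.Icc (0:ℝ) T,
        HasDerivWithinAt (fun s => -A * k s) (-((w t) ^ 2)⁻¹ * A) (Set.Icc (0:ℝ) T) t) ∧
      -A * k 0 = 0 ∧ A = g (-A * k T)) ∧
    (∀ μ h : ℝ → ℝ,
      (∀ t ∈ Set.Icc (0:ℝ) T,
        HasDerivWithinAt μ (-((w t) ^ 2)⁻¹ * h t) (Set.Icc (0:ℝ) T) t) →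
      (∀ t ∈ Set.Icc (0:ℝ) T, HasDerivWithinAt h 0 (Set.Icc (0:ℝ) T) t) →
      μ 0 = 0 → h T = g (μ T) →
      ∃ A ∈ ({-1, 0, 1} : Set ℝ),
        ∀ t ∈ Set.Icc (0:ℝ) T, μ t = -A * k t ∧ h t = A) := by
  obtain ⟨hδ0, hδT⟩ := hδ
  have hT : (0 : ℝ) ≤ T := hδ0.le.trans hδT.le
  set F : ℝ → ℝ := fun s => ((w s) ^ 2)⁻¹
  have hwc : ContinuousOn w (Icc 0 T) :=
    (continuousOn_exp_integral_Icc hT (continuousOn_const.add fun t ht =>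
      (hη t ht).continuousWithinAt)).congr fun t _ => hw t
  have hwpos : ∀ s, 0 < w s := fun s => hw s ▸ Real.exp_pos _
  have hFpos : ∀ s, 0 < F s := fun s => inv_pos.2 (pow_pos (hwpos s) 2)
  have hFc : ContinuousOn F (Icc 0 T) := (hwc.pow 2).inv₀ fun s _ => (pow_pos (hwpos s) 2).ne'
  have hrδ : 0 < r δ := hr δ ▸ intervalIntegral_pos_of_pos_on
    (hFc.mono (uIcc_subset_Icc ⟨hδ0.le, hδT.le⟩ (right_mem_Icc.2 hT))).intervalIntegrable
    (fun s _ => hFpos s) hδT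
  have hrk : r δ < k T := hr δ ▸ hk T ▸
    integral_lt_integral_of_pos_of_lt hFc (fun s _ => hFpos s) hδ0 hδT.le
  have hkd : ∀ t ∈ Icc 0 T, HasDerivWithinAt k (F t) (Icc 0 T) t :=
    funext hk ▸ fun t ht => hasDerivWithinAt_integral_Icc hFc ht
  have hk0 : k 0 = 0 := by simp [hk]
  have hgA : ∀ A, A = g (-A * k T) ↔ A ∈ ({-1, 0, 1} : Set ℝ) := fun A =>
    funext hg ▸ eq_negClip_neg_mul_iff hrδ hrk
  refine ⟨fun A hA => ⟨fun t ht => ?_, by simp [hk0], (hgA A).2 hA⟩, ?_⟩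
  · simpa only [mul_comm, neg_mul, mul_neg] using (hkd t ht).const_mul (-A)
  intro μ h hμ hh hμ0 hhT
  have hsol := eq_neg_mul_primitive_of_hasDerivWithinAt hT hkd hk0 hμ hh hμ0
  exact ⟨h T, (hgA _).1 ((hsol T (right_mem_Icc.2 hT)).1 ▸ hhT), hsol⟩

/-- The deterministic forward–backward system `μ' = −w⁻²·h`, `h' = 0` on `[0,T]`
with `μ(0) = 0`, `h(T) = g(μ(T))` has exactly three solutions, namely
`(μ(t), h(t)) = (−A·k_t, A)` for `A ∈ {−1, 0, 1}`. -/
theorem fbsde_no_common_noise_three_solutions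
    (T κ δ : ℝ) (hT : 0 < T) (hδ : δ ∈ Set.Ioo 0 T)
    (η w r k g : ℝ → ℝ)
    (hη : ∀ t ∈ Set.Icc (0:ℝ) T,
      HasDerivWithinAt η (η t ^ 2 - 2 * κ * η t - 1) (Set.Icc (0:ℝ) T) t)
    (hηT : η T = 1)
    (hw : ∀ t, w t = Real.exp (∫ s in t..T, (-κ + η s)))
    (hr : ∀ t, r t = ∫ s in t..T, ((w s) ^ 2)⁻¹)
    (hk : ∀ t, k t = ∫ s in (0:ℝ)..t, ((w s) ^ 2)⁻¹)
    (hrδ : 0 < r δ)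
    (hg : ∀ x, g x = if |x| ≤ r δ then -x / r δ else -Real.sign x) :
    (∀ A ∈ ({-1, 0, 1} : Set ℝ),
      (∀ t ∈ Set.Icc (0:ℝ) T,
        HasDerivWithinAt (fun s => -A * k s) (-((w t) ^ 2)⁻¹ * A) (Set.Icc (0:ℝ) T) t) ∧
      -A * k 0 = 0 ∧ A = g (-A * k T)) ∧
    (∀ μ h : ℝ → ℝ,
      (∀ t ∈ Set.Icc (0:ℝ) T,
        HasDerivWithinAt μ (-((w t) ^ 2)⁻¹ * h t) (Set.Icc (0:ℝ) T) t) →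
      (∀ t ∈ Set.Icc (0:ℝ) T, HasDerivWithinAt h 0 (Set.Icc (0:ℝ) T) t) →
      μ 0 = 0 → h T = g (μ T) →
      ∃ A ∈ ({-1, 0, 1} : Set ℝ),
        ∀ t ∈ Set.Icc (0:ℝ) T, μ t = -A * k t ∧ h t = A) :=
  fbsde_no_common_noise_three_solutions_general T κ δ hδ η w r k g hη hw hr hk hg
end

section
/- For A ∈ ℝ define the equilibrium cost J(A) := (A²/2)·[∫_0^T ((1 + η_t²)·w_t²·k_t² − 2·η_t·k_t + w_t^{−2}) dt + (1 − w_T·k_T)²] + (1/2)·w_T²·σ²·∫_0^T w_t^{−2} dt + (1/2)·∫_0^T (1 + η_t²)·σ²·w_t²·k_t dt, where σ ≥ 0. Then among the three equilibria A ∈ {−1, 0, 1}, the cost J is uniquely minimized at A = 0; in particular J(1) = J(−1) > J(0). (This is the minimal-cost selection: the representative player's cost at the equilibrium parametrized by A equals J(A).) -/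
/-- Minimal-cost selection: among the three equilibria `A ∈ {−1, 0, 1}`, the
equilibrium cost `J(A)` is uniquely minimized at `A = 0`; in particular
`J(1) = J(−1) > J(0)`. -/
theorem minimal_cost_selection
    (T κ σ : ℝ) (hT : 0 < T) (hσ : 0 ≤ σ)
    (η w k : ℝ → ℝ)
    (hη : ∀ t ∈ Set.Icc (0:ℝ) T,
      HasDerivWithinAt η (η t ^ 2 - 2 * κ * η t - 1) (Set.Icc (0:ℝ) T) t)
    (hηT : η T = 1)
    (hw : ∀ t, w t = Real.exp (∫ s in t..T, (-κ + η s)))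
    (hk : ∀ t, k t = ∫ s in (0:ℝ)..t, ((w s) ^ 2)⁻¹)
    (J : ℝ → ℝ)
    (hJ : ∀ A : ℝ, J A =
      A ^ 2 / 2 *
        ((∫ t in (0:ℝ)..T,
          ((1 + η t ^ 2) * (w t) ^ 2 * (k t) ^ 2 - 2 * η t * k t + ((w t) ^ 2)⁻¹))
          + (1 - w T * k T) ^ 2)
      + 1 / 2 * (w T) ^ 2 * σ ^ 2 * (∫ t in (0:ℝ)..T, ((w t) ^ 2)⁻¹)
      + 1 / 2 * (∫ t in (0:ℝ)..T, (1 + η t ^ 2) * σ ^ 2 * (w t) ^ 2 * k t)) :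
    J 1 = J (-1) ∧ J 0 < J 1 ∧ J 0 < J (-1) := by
  have hu : Set.uIcc (0:ℝ) T = Set.Icc 0 T := Set.uIcc_of_le hT.le
  have hηc : ContinuousOn η (Set.Icc (0:ℝ) T) :=
    fun t ht => (hη t ht).continuousWithinAt
  have hwpos : ∀ t, 0 < w t := fun t => (hw t) ▸ Real.exp_pos _
  -- continuity of w on [0,T]
  have hgint : MeasureTheory.IntegrableOn (fun s => -κ + η s) (Set.Icc (0:ℝ) T) :=
    (continuousOn_const.add hηc).integrableOn_compact isCompact_Icc
  have hwc : ContinuousOn w (Set.Icc (0:ℝ) T) := by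
    have h1 : ContinuousOn (fun t => ∫ s in t..T, (-κ + η s)) (Set.Icc (0:ℝ) T) := by
      have := intervalIntegral.continuousOn_primitive_interval_left (f := fun s => -κ + η s)
        (a := (0:ℝ)) (b := T) (μ := MeasureTheory.volume) (by rwa [hu])
      rwa [hu] at this
    have : ContinuousOn (fun t => Real.exp (∫ s in t..T, (-κ + η s))) (Set.Icc (0:ℝ) T) :=
      Real.continuous_exp.comp_continuousOn h1
    exact this.congr (fun t _ => hw t)
  -- continuity of k on [0,T]
  have hw2c : ContinuousOn (fun s => ((w s) ^ 2)⁻¹) (Set.Icc (0:ℝ) T) :=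
    ((hwc.pow 2).inv₀ (fun t _ => pow_ne_zero _ (hwpos t).ne'))
  have hkc : ContinuousOn k (Set.Icc (0:ℝ) T) := by
    have h1 := intervalIntegral.continuousOn_primitive_interval (f := fun s => ((w s) ^ 2)⁻¹)
        (a := (0:ℝ)) (b := T) (μ := MeasureTheory.volume)
        (by rw [hu]; exact hw2c.integrableOn_compact isCompact_Icc)
    rw [hu] at h1
    exact h1.congr (fun t _ => hk t)
  -- the main integrand
  set f : ℝ → ℝ := fun t =>
    (1 + η t ^ 2) * (w t) ^ 2 * (k t) ^ 2 - 2 * η t * k t + ((w t) ^ 2)⁻¹ with hf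
  have hfc : ContinuousOn f (Set.Icc (0:ℝ) T) := by
    apply ContinuousOn.add
    · exact ((continuousOn_const.add (hηc.pow 2)).mul (hwc.pow 2)).mul (hkc.pow 2)
        |>.sub ((continuousOn_const.mul hηc).mul hkc)
    · exact hw2c
  have hfint : IntervalIntegrable f MeasureTheory.volume 0 T :=
    (hfc.mono (by rw [hu])).intervalIntegrable
  have hfpos : ∀ t, 0 < f t := by
    intro t
    have hwt := hwpos t
    have key : f t = (w t * k t) ^ 2 + (η t * (w t * k t) - (w t)⁻¹) ^ 2 := by
      have h1 : ((w t) ^ 2)⁻¹ = ((w t)⁻¹) ^ 2 := by rw [inv_pow]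
      have h2 : w t * (w t)⁻¹ = 1 := mul_inv_cancel₀ hwt.ne'
      rw [hf]; ring_nf
      field_simp
    rw [key]
    rcases eq_or_ne (w t * k t) 0 with h | h
    · rw [h]
      have h2 : (0:ℝ) < ((w t)⁻¹) ^ 2 := by positivity
      nlinarith [sq_nonneg (η t * 0 - (w t)⁻¹)]
    · have h1 : 0 < (w t * k t) ^ 2 := by positivity
      have h2 : 0 ≤ (η t * (w t * k t) - (w t)⁻¹) ^ 2 := sq_nonneg _
      linarith
  have hintpos : 0 < ∫ t in (0:ℝ)..T, f t :=
    intervalIntegral.intervalIntegral_pos_of_pos hfint hfpos hT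
  have hCpos : 0 < (∫ t in (0:ℝ)..T, f t) + (1 - w T * k T) ^ 2 := by
    have := sq_nonneg (1 - w T * k T); linarith
  refine ⟨by rw [hJ 1, hJ (-1)]; norm_num, ?_, ?_⟩
  · rw [hJ 0, hJ 1]; nlinarith [hCpos]
  · rw [hJ 0, hJ (-1)]; nlinarith [hCpos]
end

section
/- For every σ₀ > 0 and every (t,x) ∈ [0,T) × ℝ, one has |θ^{σ₀}(t,x)| ≤ 1. -/
open MeasureTheory Filter Topology

lemma aux_core (c R x : ℝ) (hc : 0 < c) (hR : 0 < R) (g G : ℝ → ℝ)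
    (hgc : Continuous g) (hgb : ∀ v, |g v| ≤ 1)
    (hGd : ∀ y, HasDerivAt G (g y) y) (hG0 : ∀ y, |G y| ≤ |y|) :
    |(∫ y : ℝ, ((x - y) / R) * Real.exp (c * (-G y - (x - y) ^ 2 / (2 * R)))) /
      (∫ y : ℝ, Real.exp (c * (-G y - (x - y) ^ 2 / (2 * R))))| ≤ 1 := by
  have hGc : Continuous G := by
    rw [continuous_iff_continuousAt]; exact fun y => (hGd y).continuousAt
  set b : ℝ := c / (4 * R) with hbdef
  have hb : 0 < b := by rw [hbdef]; positivity
  set A : ℝ := Real.exp (c * (|x| + R)) with hAdef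
  have hA : 0 < A := Real.exp_pos _
  set φ : ℝ → ℝ := fun y => Real.exp (c * (-G y - (x - y) ^ 2 / (2 * R))) with hφ
  suffices h : |(∫ y, ((x - y) / R) * φ y) / (∫ y, φ y)| ≤ 1 by
    simpa only [hφ] using h
  have hφpos : ∀ y, 0 < φ y := fun y => by simp only [hφ]; exact Real.exp_pos _
  have hφcont : Continuous φ := by
    simp only [hφ]
    exact Real.continuous_exp.comp (continuous_const.mul ((hGc.neg).sub
      (((continuous_const.sub continuous_id).pow 2).div_const _)))
  have hbound : ∀ y, φ y ≤ A * Real.exp (-b * (y - x) ^ 2) := by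
    intro y
    simp only [hφ, hAdef, hbdef]
    have hu : (x - y) ^ 2 = |y - x| ^ 2 := by rw [sq_abs]; ring
    have hu2 : (y - x) ^ 2 = |y - x| ^ 2 := by rw [sq_abs]
    have h1 : -G y ≤ |y - x| + |x| := by
      have e1 : |y| ≤ |y - x| + |x| := by
        calc |y| = |(y - x) + x| := by ring_nf
        _ ≤ |y - x| + |x| := abs_add_le _ _
      linarith [neg_abs_le (G y), hG0 y]
    have h3 : |y - x| - |y - x| ^ 2 / (2 * R) ≤ R - |y - x| ^ 2 / (4 * R) := by
      have e : ∀ u : ℝ, R - u ^ 2 / (4 * R) - (u - u ^ 2 / (2 * R)) =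
          (u - 2 * R) ^ 2 / (4 * R) := by
        intro u; field_simp; ring
      have e := e |y - x|
      have := div_nonneg (sq_nonneg (|y - x| - 2 * R)) (by linarith : (0:ℝ) ≤ 4 * R)
      linarith
    have key : c * (-G y - (x - y) ^ 2 / (2 * R)) ≤
        c * (|x| + R) + (-(c / (4 * R)) * (y - x) ^ 2) := by
      have h4 : -G y - (x - y) ^ 2 / (2 * R) ≤ (|x| + R) - (y - x) ^ 2 / (4 * R) := by
        rw [hu, hu2]; linarith
      calc c * (-G y - (x - y) ^ 2 / (2 * R)) ≤ c * ((|x| + R) - (y - x) ^ 2 / (4 * R)) :=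
            mul_le_mul_of_nonneg_left h4 hc.le
        _ = c * (|x| + R) + (-(c / (4 * R)) * (y - x) ^ 2) := by ring
    calc Real.exp (c * (-G y - (x - y) ^ 2 / (2 * R)))
        ≤ Real.exp (c * (|x| + R) + (-(c / (4 * R)) * (y - x) ^ 2)) := Real.exp_le_exp.mpr key
      _ = Real.exp (c * (|x| + R)) * Real.exp (-(c / (4 * R)) * (y - x) ^ 2) := Real.exp_add _ _
  have hgauss : Integrable (fun y => Real.exp (-b * (y - x) ^ 2)) :=
    (integrable_exp_neg_mul_sq hb).comp_sub_right x
  have hgauss2 : Integrable (fun y => Real.exp (-(b / 2) * (y - x) ^ 2)) :=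
    (integrable_exp_neg_mul_sq (by positivity)).comp_sub_right x
  have hφint : Integrable φ :=
    (hgauss.const_mul A).mono' hφcont.aestronglyMeasurable
      (Eventually.of_forall fun y => by
        rw [Real.norm_eq_abs, abs_of_pos (hφpos y)]; exact hbound y)
  have habs : ∀ u : ℝ, |u| * Real.exp (-b * u ^ 2) ≤
      Real.exp (1 / (2 * b)) * Real.exp (-(b / 2) * u ^ 2) := by
    intro u
    have h2 : |u| ≤ 1 / (2 * b) + (b / 2) * u ^ 2 := by
      have e : ∀ v : ℝ, 1 / (2 * b) + (b / 2) * v ^ 2 - v = (b * v - 1) ^ 2 / (2 * b) := by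
        intro v; field_simp; ring
      have e := e |u|
      rw [← sq_abs u]
      have := div_nonneg (sq_nonneg (b * |u| - 1)) (by linarith : (0:ℝ) ≤ 2 * b)
      linarith
    have h1 : |u| ≤ Real.exp (1 / (2 * b) + (b / 2) * u ^ 2) := by
      calc |u| ≤ 1 / (2 * b) + (b / 2) * u ^ 2 := h2
        _ ≤ Real.exp (1 / (2 * b) + (b / 2) * u ^ 2) := by
            linarith [Real.add_one_le_exp (1 / (2 * b) + (b / 2) * u ^ 2)]
    calc |u| * Real.exp (-b * u ^ 2)
        ≤ Real.exp (1 / (2 * b) + (b / 2) * u ^ 2) * Real.exp (-b * u ^ 2) :=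
          mul_le_mul_of_nonneg_right h1 (Real.exp_pos _).le
      _ = Real.exp (1 / (2 * b)) * Real.exp (-(b / 2) * u ^ 2) := by
          rw [← Real.exp_add, ← Real.exp_add]; congr 1; ring
  have hf1cont : Continuous (fun y => ((x - y) / R) * φ y) :=
    ((continuous_const.sub continuous_id).div_const R).mul hφcont
  have hf1int : Integrable (fun y => ((x - y) / R) * φ y) := by
    apply Integrable.mono' (((hgauss2.const_mul (Real.exp (1 / (2 * b)))).const_mul (A / R)))
      hf1cont.aestronglyMeasurable
    refine Eventually.of_forall fun y => ?_
    rw [Real.norm_eq_abs, abs_mul, abs_of_pos (hφpos y), abs_div, abs_of_pos hR]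
    calc |x - y| / R * φ y ≤ |x - y| / R * (A * Real.exp (-b * (y - x) ^ 2)) :=
          mul_le_mul_of_nonneg_left (hbound y) (by positivity)
      _ = (A / R) * (|y - x| * Real.exp (-b * (y - x) ^ 2)) := by rw [abs_sub_comm]; ring
      _ ≤ (A / R) * (Real.exp (1 / (2 * b)) * Real.exp (-(b / 2) * (y - x) ^ 2)) :=
          mul_le_mul_of_nonneg_left (habs (y - x)) (by positivity)
  have hf2int : Integrable (fun y => g y * φ y) :=
    hφint.mono' (hgc.mul hφcont).aestronglyMeasurable (Eventually.of_forall fun y => by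
      rw [Real.norm_eq_abs, abs_mul, abs_of_pos (hφpos y)]
      exact mul_le_of_le_one_left (hφpos y).le (hgb y))
  have hder : ∀ y, HasDerivAt φ (c * (((x - y) / R) * φ y) - c * (g y * φ y)) y := by
    intro y
    have h1 : HasDerivAt (fun z : ℝ => x - z) (-1) y := (hasDerivAt_id y).const_sub x
    have h2 := h1.pow 2
    have h3 : HasDerivAt (fun z => c * (-G z - (x - z) ^ 2 / (2 * R)))
        (c * (-(g y) - ((2 : ℕ) * (x - y) ^ (2 - 1) * (-1)) / (2 * R))) y :=
      (((hGd y).neg).sub (h2.div_const (2 * R))).const_mul c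
    have h4 := h3.exp
    simp only [hφ]
    convert h4 using 1
    have hRne : (2 : ℝ) * R ≠ 0 := by positivity
    field_simp
    ring
  have hφ'cont : Continuous (fun y => c * (((x - y) / R) * φ y) - c * (g y * φ y)) :=
    (continuous_const.mul hf1cont).sub (continuous_const.mul (hgc.mul hφcont))
  have hφ'int : Integrable (fun y => c * (((x - y) / R) * φ y) - c * (g y * φ y)) :=
    (hf1int.const_mul c).sub (hf2int.const_mul c)
  have hexp_top : Tendsto (fun u : ℝ => Real.exp (-b * u ^ 2)) atTop (𝓝 0) :=
    Real.tendsto_exp_atBot.comp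
      ((tendsto_pow_atTop two_ne_zero).const_mul_atTop_of_neg (by linarith))
  have hexp_bot : Tendsto (fun u : ℝ => Real.exp (-b * u ^ 2)) atBot (𝓝 0) := by
    have h := hexp_top.comp tendsto_neg_atBot_atTop
    exact h.congr (fun u => by simp [Function.comp, neg_sq])
  have hshift_top : Tendsto (fun y : ℝ => y - x) atTop atTop := by
    simpa [sub_eq_add_neg] using tendsto_atTop_add_const_right atTop (-x) tendsto_id
  have hshift_bot : Tendsto (fun y : ℝ => y - x) atBot atBot := by
    simpa [sub_eq_add_neg] using tendsto_atBot_add_const_right atBot (-x) tendsto_id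
  have hMtop : Tendsto (fun y => A * Real.exp (-b * (y - x) ^ 2)) atTop (𝓝 0) := by
    have := (hexp_top.comp hshift_top).const_mul A
    simpa [Function.comp] using this
  have hMbot : Tendsto (fun y => A * Real.exp (-b * (y - x) ^ 2)) atBot (𝓝 0) := by
    have := (hexp_bot.comp hshift_bot).const_mul A
    simpa [Function.comp] using this
  have hφtop : Tendsto φ atTop (𝓝 0) :=
    tendsto_of_tendsto_of_tendsto_of_le_of_le tendsto_const_nhds hMtop
      (fun y => (hφpos y).le) hbound
  have hφbot : Tendsto φ atBot (𝓝 0) :=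
    tendsto_of_tendsto_of_tendsto_of_le_of_le tendsto_const_nhds hMbot
      (fun y => (hφpos y).le) hbound
  have hIoi : ∫ y in Set.Ioi (0:ℝ), (c * (((x - y) / R) * φ y) - c * (g y * φ y)) = 0 - φ 0 :=
    integral_Ioi_of_hasDerivAt_of_tendsto hφcont.continuousWithinAt (fun y _ => hder y)
      hφ'int.integrableOn hφtop
  have hIic : ∫ y in Set.Iic (0:ℝ), (c * (((x - y) / R) * φ y) - c * (g y * φ y)) = φ 0 - 0 :=
    integral_Iic_of_hasDerivAt_of_tendsto hφcont.continuousWithinAt (fun y _ => hder y)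
      hφ'int.integrableOn hφbot
  have htot : ∫ y, (c * (((x - y) / R) * φ y) - c * (g y * φ y)) = 0 := by
    rw [← intervalIntegral.integral_Iic_add_Ioi hφ'int.integrableOn hφ'int.integrableOn,
      hIoi, hIic]
    ring
  have hNM : (∫ y, ((x - y) / R) * φ y) = ∫ y, g y * φ y := by
    have h5 : ∫ y, (c * (((x - y) / R) * φ y) - c * (g y * φ y)) =
        c * (∫ y, ((x - y) / R) * φ y) - c * (∫ y, g y * φ y) := by
      rw [integral_sub (hf1int.const_mul c) (hf2int.const_mul c),
        integral_const_mul, integral_const_mul]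
    rw [h5] at htot
    have h6 : c * ((∫ y, ((x - y) / R) * φ y) - ∫ y, g y * φ y) = 0 := by linarith
    rcases mul_eq_zero.mp h6 with h | h
    · exact absurd h hc.ne'
    · linarith
  have hDpos : 0 < ∫ y, φ y := by
    rw [integral_pos_iff_support_of_nonneg (fun y => (hφpos y).le) hφint]
    have hs : Function.support φ = Set.univ := Set.eq_univ_of_forall fun y => (hφpos y).ne'
    rw [hs, Real.volume_univ]
    exact ENNReal.zero_lt_top
  have hNle : |∫ y, ((x - y) / R) * φ y| ≤ ∫ y, φ y := by
    rw [hNM]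
    calc |∫ y, g y * φ y| ≤ ∫ y, |g y * φ y| := by
          simpa only [Real.norm_eq_abs] using
            norm_integral_le_integral_norm (μ := volume) (fun y => g y * φ y)
      _ ≤ ∫ y, φ y := integral_mono hf2int.abs hφint (fun y => by
          rw [abs_mul, abs_of_pos (hφpos y)]
          exact mul_le_of_le_one_left (hφpos y).le (hgb y))
  rw [abs_div, abs_of_pos hDpos]
  exact (div_le_one hDpos).mpr hNle
/-- For every `σ₀ > 0` and every `(t,x) ∈ [0,T) × ℝ`, `|θ^{σ₀}(t,x)| ≤ 1`. -/
theorem cole_hopf_bounded_by_one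
    (T κ δ : ℝ) (hT : 0 < T) (hδ : δ ∈ Set.Ioo 0 T)
    (η w r g : ℝ → ℝ)
    (hη : ∀ t ∈ Set.Icc (0:ℝ) T,
      HasDerivWithinAt η (η t ^ 2 - 2 * κ * η t - 1) (Set.Icc (0:ℝ) T) t)
    (hηT : η T = 1)
    (hw : ∀ t, w t = Real.exp (∫ s in t..T, (-κ + η s)))
    (hr : ∀ t, r t = ∫ s in t..T, ((w s) ^ 2)⁻¹)
    (hrδ : 0 < r δ)
    (hg : ∀ x, g x = if |x| ≤ r δ then -x / r δ else -Real.sign x)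
    (Θ : ℝ → ℝ → ℝ → ℝ)
    (hΘ : ∀ σ₀ : ℝ, 0 < σ₀ → ∀ t ∈ Set.Ico (0:ℝ) T, ∀ x : ℝ, Θ σ₀ t x =
      (∫ y : ℝ, ((x - y) / r t) *
        Real.exp ((σ₀ ^ 2)⁻¹ * (-(∫ v in (0:ℝ)..y, g v) - (x - y) ^ 2 / (2 * r t)))) /
      (∫ y : ℝ, Real.exp ((σ₀ ^ 2)⁻¹ * (-(∫ v in (0:ℝ)..y, g v) - (x - y) ^ 2 / (2 * r t))))) :
    ∀ σ₀ : ℝ, 0 < σ₀ → ∀ t ∈ Set.Ico (0:ℝ) T, ∀ x : ℝ, |Θ σ₀ t x| ≤ 1 := by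
  -- continuity of g
  have hgeq : g = fun z => -(min (max z (-(r δ))) (r δ)) / r δ := by
    funext z
    rw [hg z]
    rcases le_or_gt |z| (r δ) with h | h
    · rw [if_pos h]
      rw [abs_le] at h
      rw [max_eq_left h.1, min_eq_left h.2]
    · rw [if_neg (not_le.mpr h)]
      rcases lt_abs.mp h with h1 | h1
      · have hz : 0 < z := lt_trans hrδ h1
        rw [Real.sign_of_pos hz, max_eq_left (by linarith), min_eq_right h1.le, neg_div,
          div_self hrδ.ne']
      · have hz : z < 0 := by linarith
        rw [Real.sign_of_neg hz, max_eq_right (by linarith), min_eq_left (by linarith),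
          neg_neg, neg_neg, div_self hrδ.ne']
  have hgc : Continuous g := by
    rw [hgeq]
    exact (((continuous_id.max continuous_const).min continuous_const).neg).div_const _
  have hgb : ∀ v, |g v| ≤ 1 := by
    intro v
    rw [hg v]
    split_ifs with h
    · rw [abs_div, abs_neg, abs_of_pos hrδ]
      exact (div_le_one hrδ).mpr h
    · rw [abs_neg]
      rcases lt_trichotomy v 0 with hv | hv | hv
      · simp [Real.sign_of_neg hv]
      · simp [hv]
      · simp [Real.sign_of_pos hv]
  -- continuity and positivity of w on [0, T]
  have hηc : ContinuousOn η (Set.Icc 0 T) := fun s hs => (hη s hs).continuousWithinAt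
  have hfc : ContinuousOn (fun s => -κ + η s) (Set.Icc 0 T) := continuousOn_const.add hηc
  have hIcc : Set.uIcc (0:ℝ) T = Set.Icc 0 T := Set.uIcc_of_le hT.le
  have hI0T : IntervalIntegrable (fun v => -κ + η v) MeasureTheory.volume 0 T := by
    apply ContinuousOn.intervalIntegrable
    rwa [hIcc]
  have hPic : ContinuousOn (fun s => ∫ v in (0:ℝ)..s, (-κ + η v)) (Set.Icc 0 T) := by
    have h := intervalIntegral.continuousOn_primitive_interval
      (f := fun v => -κ + η v) (a := 0) (b := T) (μ := MeasureTheory.volume) ?_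
    · rwa [hIcc] at h
    · rw [hIcc]
      exact hfc.integrableOn_Icc
  have hwc : ContinuousOn w (Set.Icc 0 T) := by
    have hW : ∀ s ∈ Set.Icc (0:ℝ) T,
        Real.exp ((∫ v in (0:ℝ)..T, (-κ + η v)) - ∫ v in (0:ℝ)..s, (-κ + η v)) = w s := by
      intro s hs
      rw [hw s]
      congr 1
      apply intervalIntegral.integral_interval_sub_left hI0T
      apply ContinuousOn.intervalIntegrable
      apply hfc.mono
      rw [Set.uIcc_of_le hs.1]
      exact Set.Icc_subset_Icc le_rfl hs.2
    exact ContinuousOn.congr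
      (Real.continuous_exp.comp_continuousOn (continuousOn_const.sub hPic))
      (fun s hs => (hW s hs).symm)
  have hwpos : ∀ s, 0 < w s := fun s => by rw [hw s]; exact Real.exp_pos _
  -- main
  intro σ₀ hσ₀ t ht x
  have hts : Set.uIcc t T ⊆ Set.Icc 0 T := by
    rw [Set.uIcc_of_le ht.2.le]
    exact Set.Icc_subset_Icc ht.1 le_rfl
  have hrt : 0 < r t := by
    rw [hr t]
    apply intervalIntegral.intervalIntegral_pos_of_pos_on
    · apply ContinuousOn.intervalIntegrable
      exact ((hwc.mono hts).pow 2).inv₀ (fun s _ => pow_ne_zero 2 (hwpos s).ne')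
    · exact fun s _ => inv_pos.mpr (pow_pos (hwpos s) 2)
    · exact ht.2
  rw [hΘ σ₀ hσ₀ t ht x]
  have hGd : ∀ y, HasDerivAt (fun z => ∫ v in (0:ℝ)..z, g v) (g y) y := fun y =>
    intervalIntegral.integral_hasDerivAt_right (hgc.intervalIntegrable _ _)
      (hgc.stronglyMeasurableAtFilter _ _) hgc.continuousAt
  have hG0 : ∀ y, |∫ v in (0:ℝ)..y, g v| ≤ |y| := by
    intro y
    have h := intervalIntegral.norm_integral_le_of_norm_le_const (C := 1) (a := (0:ℝ)) (b := y)
      (f := g) (fun v _ => by rw [Real.norm_eq_abs]; exact hgb v)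
    simpa using h
  exact aux_core ((σ₀ ^ 2)⁻¹) (r t) x (by positivity) hrt g (fun z => ∫ v in (0:ℝ)..z, g v)
    hgc hgb hGd hG0
end

section
/- For every σ₀ > 0 and every t ∈ [0,T), the function x ↦ θ^{σ₀}(t,x) is non-increasing on ℝ: if x ≤ y then θ^{σ₀}(t,x) ≥ θ^{σ₀}(t,y). -/
open MeasureTheory

/-!
Substituting `u = x - y`, `θ(t, x) = E_x[u] / r_t`, where `E_x` is the mean under the density
proportional to `p_x(u) = exp(σ₀⁻² (-G(x - u) - u² / (2 r_t)))` with `G = ∫₀ g`; boundedness of `g`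
makes these densities integrable. Since `g` is antitone, `G` is concave, so for `x ≤ x'` the
likelihood ratio `p_x' / p_x` is antitone in `u`. Chebyshev's integral inequality, applied to the
symmetrization `∬ (u - v) (p_x(u) p_x'(v) - p_x'(u) p_x(v))`, then gives `E_x'[u] ≤ E_x[u]`.
-/

theorem integral_mul_integral_le_of_antitone_ratio {α : Type*} [MeasurableSpace α]
    [LinearOrder α] {μ : Measure α} [SFinite μ] {f p q : α → ℝ} (hf : Monotone f)
    (hp : Integrable p μ) (hq : Integrable q μ)
    (hfp : Integrable (fun a => f a * p a) μ) (hfq : Integrable (fun a => f a * q a) μ)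
    (hpq : ∀ a b, b ≤ a → q a * p b ≤ p a * q b) :
    (∫ a, f a * q a ∂μ) * ∫ a, p a ∂μ ≤ (∫ a, f a * p a ∂μ) * ∫ a, q a ∂μ := by
  set F : α × α → ℝ := fun z => f z.1 * p z.1 * q z.2 - f z.1 * q z.1 * p z.2
  have hF : Integrable F (μ.prod μ) := (hfp.mul_prod hq).sub (hfq.mul_prod hp)
  have hF_eq : ∫ z, F z ∂μ.prod μ =
      (∫ a, f a * p a ∂μ) * (∫ a, q a ∂μ) - (∫ a, f a * q a ∂μ) * ∫ a, p a ∂μ := by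
    rw [integral_sub (hfp.mul_prod hq) (hfq.mul_prod hp),
      integral_prod_mul (fun a => f a * p a) q, integral_prod_mul (fun a => f a * q a) p]
  -- `F (a, b) + F (b, a) = (f a - f b) (p a q b - q a p b)`
  have hsymm : 0 ≤ ∫ z, (F z + (F ∘ Prod.swap) z) ∂μ.prod μ := by
    refine integral_nonneg fun ⟨a, b⟩ => ?_
    simp only [F, Function.comp_apply, Prod.swap_prod_mk, Pi.zero_apply]
    rcases le_total b a with hba | hab
    · nlinarith [mul_nonneg (sub_nonneg.2 (hf hba)) (sub_nonneg.2 (hpq a b hba))]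
    · nlinarith [mul_nonneg (sub_nonneg.2 (hf hab)) (sub_nonneg.2 (hpq b a hab))]
  have hswap : ∫ z, (F ∘ Prod.swap) z ∂μ.prod μ = ∫ z, F z ∂μ.prod μ := integral_prod_swap F
  rw [integral_add hF hF.swap, hswap] at hsymm
  linarith

theorem integrable_exp_mul_abs_sub_mul_sq (b : ℝ) {a : ℝ} (ha : 0 < a) :
    Integrable fun u : ℝ => Real.exp (b * |u| - a * u ^ 2) := by
  refine ((integrable_exp_neg_mul_sq (half_pos ha)).const_mul
    (Real.exp (b ^ 2 / (2 * a)))).mono' (by fun_prop) (.of_forall fun u => ?_)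
  rw [Real.norm_of_nonneg (Real.exp_pos _).le, ← Real.exp_add, Real.exp_le_exp]
  have hsq := sq_nonneg (b - a * |u|)
  rw [sub_sq, mul_pow, sq_abs] at hsq
  have key : b * |u| - a * u ^ 2 + a / 2 * u ^ 2 ≤ b ^ 2 / (2 * a) := by
    rw [le_div_iff₀ (by positivity)]
    linear_combination hsq
  linarith

theorem Antitone.intervalIntegral_add_le_of_le {g : ℝ → ℝ} (hg : Antitone g) {a b k : ℝ}
    (hab : a ≤ b) (hk : 0 ≤ k) : ∫ v in b..b + k, g v ≤ ∫ v in a..a + k, g v := by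
  have hshift : ∫ v in a..a + k, g (v + (b - a)) = ∫ v in b..b + k, g v := by
    rw [intervalIntegral.integral_comp_add_right]; ring_nf
  rw [← hshift]
  exact intervalIntegral.integral_mono_on (by linarith)
    (hg.comp_monotone fun _ _ h => by linarith).intervalIntegrable hg.intervalIntegrable
    fun v _ => hg (by linarith)

theorem intervalIntegral_inv_sq_exp_pos {f : ℝ → ℝ} {t T : ℝ} (htT : t < T)
    (hf : IntervalIntegrable f volume t T) :
    0 < ∫ s in t..T, ((Real.exp (∫ v in s..T, f v)) ^ 2)⁻¹ := by
  have hcont : ContinuousOn (fun s => ∫ v in s..T, f v) (Set.uIcc t T) :=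
    intervalIntegral.continuousOn_primitive_interval_left ((intervalIntegrable_iff' (f := f)).1 hf)
  refine intervalIntegral.intervalIntegral_pos_of_pos_on ?_ (fun s _ => by positivity) htT
  exact (((Real.continuous_exp.comp_continuousOn hcont).pow 2).inv₀
    fun s _ => (pow_pos (Real.exp_pos _) 2).ne').intervalIntegrable

theorem ite_abs_le_neg_div_neg_sign_eq {ρ : ℝ} (hρ : 0 < ρ) (v : ℝ) :
    (if |v| ≤ ρ then -v / ρ else -Real.sign v) = -max (-1) (min 1 (v / ρ)) := by
  split_ifs with hv
  · rw [abs_le] at hv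
    rw [min_eq_right ((div_le_one hρ).2 hv.2), max_eq_right ((le_div_iff₀ hρ).2 (by linarith)),
      neg_div]
  · rcases lt_or_gt_of_ne (show v ≠ 0 by rintro rfl; simp [hρ.le] at hv) with hneg | hpos
    · rw [abs_of_neg hneg, not_le] at hv
      have : v / ρ < -1 := (div_lt_iff₀ hρ).2 (by linarith)
      rw [Real.sign_of_neg hneg, min_eq_right (by linarith), max_eq_left this.le, neg_neg]
    · rw [abs_of_pos hpos, not_le] at hv
      have : 1 < v / ρ := (lt_div_iff₀ hρ).2 (by linarith)
      rw [Real.sign_of_pos hpos, min_eq_left this.le, max_eq_right (by norm_num)]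

theorem antitone_ite_abs_le_neg_div_neg_sign {ρ : ℝ} (hρ : 0 < ρ) :
    Antitone fun v => if |v| ≤ ρ then -v / ρ else -Real.sign v := by
  simp only [ite_abs_le_neg_div_neg_sign_eq hρ]
  exact (monotone_const.max (monotone_const.min (monotone_id.div_const hρ.le))).neg

theorem abs_ite_abs_le_neg_div_neg_sign_le_one {ρ : ℝ} (hρ : 0 < ρ) (v : ℝ) :
    |if |v| ≤ ρ then -v / ρ else -Real.sign v| ≤ 1 := by
  rw [ite_abs_le_neg_div_neg_sign_eq hρ, abs_neg, abs_le]
  exact ⟨le_max_left _ _, max_le (by norm_num) (min_le_left _ _)⟩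

/-- `θ^{σ₀}(t, x)` is `coleHopfQuotient g σ₀⁻² r_t x`. -/
noncomputable def coleHopfQuotient (g : ℝ → ℝ) (c R x : ℝ) : ℝ :=
  (∫ y, (x - y) / R * Real.exp (c * (-(∫ v in (0:ℝ)..y, g v) - (x - y) ^ 2 / (2 * R)))) /
    ∫ y, Real.exp (c * (-(∫ v in (0:ℝ)..y, g v) - (x - y) ^ 2 / (2 * R)))

/-- The integrand of `coleHopfQuotient` in the variable `u = x - y`. -/
noncomputable def coleHopfWeight (g : ℝ → ℝ) (c R x u : ℝ) : ℝ :=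
  Real.exp (c * (-(∫ v in (0:ℝ)..x - u, g v) - u ^ 2 / (2 * R)))

theorem coleHopfQuotient_eq (g : ℝ → ℝ) (c R x : ℝ) :
    coleHopfQuotient g c R x =
      (∫ u, u * coleHopfWeight g c R x u) / (R * ∫ u, coleHopfWeight g c R x u) := by
  have hN : ∫ y, (x - y) / R * Real.exp (c * (-(∫ v in (0:ℝ)..y, g v) - (x - y) ^ 2 / (2 * R)))
      = ∫ u, u / R * coleHopfWeight g c R x u := by
    refine Eq.trans ?_ (integral_sub_left_eq_self (fun u => u / R * coleHopfWeight g c R x u) _ x)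
    simp only [coleHopfWeight, sub_sub_cancel]
  have hD : ∫ y, Real.exp (c * (-(∫ v in (0:ℝ)..y, g v) - (x - y) ^ 2 / (2 * R)))
      = ∫ u, coleHopfWeight g c R x u := by
    refine Eq.trans ?_ (integral_sub_left_eq_self (coleHopfWeight g c R x) _ x)
    simp only [coleHopfWeight, sub_sub_cancel]
  simp_rw [coleHopfQuotient, hN, hD, div_mul_eq_mul_div, integral_div, div_div]

theorem coleHopfWeight_pos (g : ℝ → ℝ) (c R x u : ℝ) : 0 < coleHopfWeight g c R x u :=
  Real.exp_pos _

section coleHopfWeight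

variable {g : ℝ → ℝ} {c R : ℝ}

theorem continuous_coleHopfWeight (hg : ∀ a b, IntervalIntegrable g volume a b) (x : ℝ) :
    Continuous (coleHopfWeight g c R x) := by
  have := intervalIntegral.continuous_primitive hg 0
  unfold coleHopfWeight
  fun_prop

theorem coleHopfWeight_le {M : ℝ} (hgM : ∀ v, |g v| ≤ M) (hc : 0 ≤ c) (x u : ℝ) :
    coleHopfWeight g c R x u ≤
      Real.exp (c * M * |x|) * Real.exp (c * M * |u| - c / (2 * R) * u ^ 2) := by
  have hG : -(∫ v in (0:ℝ)..x - u, g v) ≤ M * |x| + M * |u| := by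
    have h := intervalIntegral.norm_integral_le_of_norm_le_const (a := 0) (b := x - u)
      fun v _ => (Real.norm_eq_abs (g v)).le.trans (hgM v)
    rw [Real.norm_eq_abs, sub_zero] at h
    have hM : 0 ≤ M := (abs_nonneg _).trans (hgM 0)
    nlinarith [neg_le_abs (∫ v in (0:ℝ)..x - u, g v), abs_sub x u]
  rw [coleHopfWeight, ← Real.exp_add, Real.exp_le_exp]
  have := mul_le_mul_of_nonneg_left hG hc
  linear_combination this

theorem coleHopfWeight_mul_le (hg : Antitone g) (hc : 0 ≤ c) {x x' u v : ℝ} (hx : x ≤ x')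
    (hvu : v ≤ u) :
    coleHopfWeight g c R x' u * coleHopfWeight g c R x v ≤
      coleHopfWeight g c R x u * coleHopfWeight g c R x' v := by
  have hincr (s : ℝ) : (∫ z in (0:ℝ)..x' - s, g z) - ∫ z in (0:ℝ)..x - s, g z =
      ∫ z in x - s..x - s + (x' - x), g z := by
    rw [intervalIntegral.integral_interval_sub_left hg.intervalIntegrable hg.intervalIntegrable]
    ring_nf
  have hconc := hg.intervalIntegral_add_le_of_le (by linarith : x - u ≤ x - v) (sub_nonneg.2 hx)
  rw [← hincr, ← hincr] at hconc
  simp only [coleHopfWeight, ← Real.exp_add, Real.exp_le_exp]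
  nlinarith [mul_le_mul_of_nonneg_left hconc hc]

variable {M : ℝ} (hg : Antitone g) (hgM : ∀ v, |g v| ≤ M) (hc : 0 < c) (hR : 0 < R)
include hg hgM hc hR

theorem integrable_coleHopfWeight (x : ℝ) : Integrable (coleHopfWeight g c R x) := by
  refine ((integrable_exp_mul_abs_sub_mul_sq (c * M) (by positivity : 0 < c / (2 * R))).const_mul
    (Real.exp (c * M * |x|))).mono'
    (continuous_coleHopfWeight (fun _ _ => hg.intervalIntegrable) x).aestronglyMeasurable
    (.of_forall fun u => ?_)
  rw [Real.norm_of_nonneg (coleHopfWeight_pos g c R x u).le]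
  exact coleHopfWeight_le hgM hc.le x u

theorem integrable_mul_coleHopfWeight (x : ℝ) :
    Integrable fun u => u * coleHopfWeight g c R x u := by
  refine ((integrable_exp_mul_abs_sub_mul_sq (c * M + 1)
    (by positivity : 0 < c / (2 * R))).const_mul (Real.exp (c * M * |x|))).mono'
    (continuous_id.mul
      (continuous_coleHopfWeight (fun _ _ => hg.intervalIntegrable) x)).aestronglyMeasurable
    (.of_forall fun u => ?_)
  rw [norm_mul, Real.norm_eq_abs, Real.norm_of_nonneg (coleHopfWeight_pos g c R x u).le]
  calc |u| * coleHopfWeight g c R x u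
      ≤ Real.exp |u| * (Real.exp (c * M * |x|) * Real.exp (c * M * |u| - c / (2 * R) * u ^ 2)) :=
        mul_le_mul (by linarith [Real.add_one_le_exp |u|]) (coleHopfWeight_le hgM hc.le x u)
          (Real.exp_pos _).le (Real.exp_pos _).le
    _ = Real.exp (c * M * |x|) * Real.exp ((c * M + 1) * |u| - c / (2 * R) * u ^ 2) := by
        simp only [← Real.exp_add]; ring_nf

theorem integral_coleHopfWeight_pos (x : ℝ) : 0 < ∫ u, coleHopfWeight g c R x u :=
  integral_exp_pos (integrable_coleHopfWeight hg hgM hc hR x)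

theorem antitone_coleHopfQuotient : Antitone (coleHopfQuotient g c R) := by
  intro x x' hx
  rw [coleHopfQuotient_eq, coleHopfQuotient_eq]
  have hD := integral_coleHopfWeight_pos hg hgM hc hR
  rw [div_le_div_iff₀ (mul_pos hR (hD x')) (mul_pos hR (hD x))]
  have hmean := integral_mul_integral_le_of_antitone_ratio monotone_id
    (integrable_coleHopfWeight hg hgM hc hR x) (integrable_coleHopfWeight hg hgM hc hR x')
    (integrable_mul_coleHopfWeight hg hgM hc hR x) (integrable_mul_coleHopfWeight hg hgM hc hR x')
    fun _ _ hvu => coleHopfWeight_mul_le hg hc.le hx hvu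
  simp only [id] at hmean
  nlinarith [mul_le_mul_of_nonneg_left hmean hR.le]

end coleHopfWeight

theorem cole_hopf_nonincreasing_in_space_general
    (T κ δ : ℝ)
    (η w r g : ℝ → ℝ)
    (hη : ∀ t ∈ Set.Icc (0:ℝ) T,
      HasDerivWithinAt η (η t ^ 2 - 2 * κ * η t - 1) (Set.Icc (0:ℝ) T) t)
    (hw : ∀ t, w t = Real.exp (∫ s in t..T, (-κ + η s)))
    (hr : ∀ t, r t = ∫ s in t..T, ((w s) ^ 2)⁻¹)
    (hrδ : 0 < r δ)
    (hg : ∀ x, g x = if |x| ≤ r δ then -x / r δ else -Real.sign x)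
    (Θ : ℝ → ℝ → ℝ → ℝ)
    (hΘ : ∀ σ₀ : ℝ, 0 < σ₀ → ∀ t ∈ Set.Ico (0:ℝ) T, ∀ x : ℝ, Θ σ₀ t x =
      (∫ y : ℝ, ((x - y) / r t) *
        Real.exp ((σ₀ ^ 2)⁻¹ * (-(∫ v in (0:ℝ)..y, g v) - (x - y) ^ 2 / (2 * r t)))) /
      (∫ y : ℝ, Real.exp ((σ₀ ^ 2)⁻¹ * (-(∫ v in (0:ℝ)..y, g v) - (x - y) ^ 2 / (2 * r t))))) :
    ∀ σ₀ : ℝ, 0 < σ₀ → ∀ t ∈ Set.Ico (0:ℝ) T, ∀ x y : ℝ, x ≤ y →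
      Θ σ₀ t y ≤ Θ σ₀ t x := by
  intro σ₀ hσ₀ t ht x y hxy
  have hη_cont : ContinuousOn η (Set.Icc 0 T) := fun s hs => (hη s hs).continuousWithinAt
  have hrt : 0 < r t := by
    simp only [hr, hw]
    refine intervalIntegral_inv_sq_exp_pos ht.2 (ContinuousOn.intervalIntegrable ?_)
    rw [Set.uIcc_of_le ht.2.le]
    exact continuousOn_const.add (hη_cont.mono (Set.Icc_subset_Icc ht.1 le_rfl))
  obtain rfl : g = _ := funext hg
  rw [hΘ σ₀ hσ₀ t ht x, hΘ σ₀ hσ₀ t ht y]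
  exact antitone_coleHopfQuotient (antitone_ite_abs_le_neg_div_neg_sign hrδ)
    (abs_ite_abs_le_neg_div_neg_sign_le_one hrδ) (by positivity) hrt hxy

/-- For every `σ₀ > 0` and `t ∈ [0,T)`, the map `x ↦ θ^{σ₀}(t,x)` is non-increasing. -/
theorem cole_hopf_nonincreasing_in_space
    (T κ δ : ℝ) (hT : 0 < T) (hδ : δ ∈ Set.Ioo 0 T)
    (η w r g : ℝ → ℝ)
    (hη : ∀ t ∈ Set.Icc (0:ℝ) T,
      HasDerivWithinAt η (η t ^ 2 - 2 * κ * η t - 1) (Set.Icc (0:ℝ) T) t)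
    (hηT : η T = 1)
    (hw : ∀ t, w t = Real.exp (∫ s in t..T, (-κ + η s)))
    (hr : ∀ t, r t = ∫ s in t..T, ((w s) ^ 2)⁻¹)
    (hrδ : 0 < r δ)
    (hg : ∀ x, g x = if |x| ≤ r δ then -x / r δ else -Real.sign x)
    (Θ : ℝ → ℝ → ℝ → ℝ)
    (hΘ : ∀ σ₀ : ℝ, 0 < σ₀ → ∀ t ∈ Set.Ico (0:ℝ) T, ∀ x : ℝ, Θ σ₀ t x =
      (∫ y : ℝ, ((x - y) / r t) *
        Real.exp ((σ₀ ^ 2)⁻¹ * (-(∫ v in (0:ℝ)..y, g v) - (x - y) ^ 2 / (2 * r t)))) /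
      (∫ y : ℝ, Real.exp ((σ₀ ^ 2)⁻¹ * (-(∫ v in (0:ℝ)..y, g v) - (x - y) ^ 2 / (2 * r t))))) :
    ∀ σ₀ : ℝ, 0 < σ₀ → ∀ t ∈ Set.Ico (0:ℝ) T, ∀ x y : ℝ, x ≤ y →
      Θ σ₀ t y ≤ Θ σ₀ t x :=
  cole_hopf_nonincreasing_in_space_general T κ δ η w r g hη hw hr hrδ hg Θ hΘ
end

section
/- Fix t ∈ [0,δ) and x ∈ ℝ with 0 < x < r_t − r_δ, and define h(y) := −∫_0^y g(v) dv − (x−y)²/(2 r_t), ȳ := −x·r_δ/(r_t − r_δ), y₁* := x − r_t and y₂* := x + r_t. Then h'(y) > 0 on (−∞, y₁*), h'(y) < 0 on (y₁*, ȳ), h'(y) > 0 on (ȳ, y₂*), and h'(y) < 0 on (y₂*, ∞); in particular y₁* is a global maximum of h on (−∞, ȳ] and y₂* is a global maximum of h on [ȳ, ∞). Moreover h(y₂*) − h(y₁*) = 2x. -/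
/-!
The drift `g` is the clamp of `v ↦ -v / r_δ` to `[-1, 1]`, so `h' y = -g y + (x - y) / r_t` is
piecewise affine: it is `(x - r_t - y) / r_t` for `y ≤ -r_δ`, `(x + r_t - y) / r_t` for `y ≥ r_δ` and
`(y (r_t - r_δ) + x r_δ) / (r_δ r_t)` in between. Since `x < r_t - r_δ`, the zeros
`x - r_t < -r_δ < ȳ < r_δ < x + r_t` each lie in the piece whose formula produces them, which gives
the sign pattern and hence the two maxima. Finally `g` is odd on `[-r_δ, r_δ]` and `≡ ±1` outside,
so `∫_{x-r_t}^{x+r_t} g = -2x`, while the quadratic term takes the same value at `x ± r_t`.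
-/

open MeasureTheory Set

theorem IsMaxOn.of_deriv_nonneg_of_nonpos {f : ℝ → ℝ} (hf : Differentiable ℝ f) {s : Set ℝ}
    (hs : Convex ℝ s) {b : ℝ} (hb : b ∈ s)
    (hinc : ∀ y ∈ interior s, y < b → 0 ≤ deriv f y)
    (hdec : ∀ y ∈ interior s, b < y → deriv f y ≤ 0) : IsMaxOn f s b := by
  intro y hy
  rcases le_total y b with hyb | hby
  · refine monotoneOn_of_deriv_nonneg (hs.inter (convex_Iic b)) hf.continuous.continuousOn
      hf.differentiableOn ?_ ⟨hy, hyb⟩ ⟨hb, self_mem_Iic⟩ hyb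
    rw [interior_inter, interior_Iic]
    exact fun z hz => hinc z hz.1 hz.2
  · refine antitoneOn_of_deriv_nonpos (hs.inter (convex_Ici b)) hf.continuous.continuousOn
      hf.differentiableOn ?_ ⟨hb, self_mem_Ici⟩ ⟨hy, hby⟩ hby
    rw [interior_inter, interior_Ici]
    exact fun z hz => hdec z hz.1 hz.2

noncomputable def satDrift (A v : ℝ) : ℝ := max (-1) (min 1 (-v / A))

section satDrift

variable {A v : ℝ}

theorem satDrift_of_le_neg (hA : 0 < A) (hv : v ≤ -A) : satDrift A v = 1 := by
  rw [satDrift, min_eq_left, max_eq_right (by norm_num)]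
  rw [le_div_iff₀ hA]; linarith

theorem satDrift_of_abs_le (hA : 0 < A) (hv : |v| ≤ A) : satDrift A v = -v / A := by
  obtain ⟨hv₁, hv₂⟩ := abs_le.mp hv
  rw [satDrift, min_eq_right, max_eq_right]
  · rw [le_div_iff₀ hA]; linarith
  · rw [div_le_one hA]; linarith

theorem satDrift_of_le (hA : 0 < A) (hv : A ≤ v) : satDrift A v = -1 := by
  rw [satDrift, min_eq_right, max_eq_left]
  · rw [div_le_iff₀ hA]; linarith
  · rw [div_le_one hA]; linarith

theorem satDrift_eq_ite (hA : 0 < A) (v : ℝ) :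
    satDrift A v = if |v| ≤ A then -v / A else -Real.sign v := by
  split_ifs with hv
  · exact satDrift_of_abs_le hA hv
  rcases lt_abs.mp (not_le.mp hv) with hpos | hneg
  · rw [satDrift_of_le hA hpos.le, Real.sign_of_pos (hA.trans hpos)]
  · rw [satDrift_of_le_neg hA (by linarith), Real.sign_of_neg (by linarith)]
    norm_num

theorem continuous_satDrift (A : ℝ) : Continuous (satDrift A) :=
  continuous_const.max (continuous_const.min (continuous_neg.div_const A))

theorem integral_satDrift {a b : ℝ} (hA : 0 < A) (ha : a ≤ -A) (hb : A ≤ b) :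
    ∫ v in a..b, satDrift A v = -(a + b) := by
  have hint : ∀ c d : ℝ, IntervalIntegrable (satDrift A) volume c d :=
    (continuous_satDrift A).intervalIntegrable
  have left : ∫ v in a..(-A), satDrift A v = -A - a := by
    rw [intervalIntegral.integral_congr (g := fun _ => 1), intervalIntegral.integral_const,
      smul_eq_mul, mul_one]
    intro v hv
    rw [uIcc_of_le ha] at hv
    exact satDrift_of_le_neg hA hv.2
  have middle : ∫ v in (-A)..A, satDrift A v = 0 := by
    rw [intervalIntegral.integral_congr (g := fun v => -v / A), intervalIntegral.integral_div,
      intervalIntegral.integral_neg, integral_id]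
    · ring
    intro v hv
    rw [uIcc_of_le (by linarith)] at hv
    exact satDrift_of_abs_le hA (abs_le.mpr hv)
  have right : ∫ v in A..b, satDrift A v = A - b := by
    rw [intervalIntegral.integral_congr (g := fun _ => -1), intervalIntegral.integral_const,
      smul_eq_mul]
    · ring
    intro v hv
    rw [uIcc_of_le hb] at hv
    exact satDrift_of_le hA hv.1
  rw [← intervalIntegral.integral_add_adjacent_intervals (hint a (-A)) (hint (-A) b),
    ← intervalIntegral.integral_add_adjacent_intervals (hint (-A) A) (hint A b),
    left, middle, right]
  ring

end satDrift

noncomputable def phase (A B x y : ℝ) : ℝ :=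
  -(∫ v in (0:ℝ)..y, satDrift A v) - (x - y) ^ 2 / (2 * B)

section phase

variable {A B x y : ℝ}

theorem hasDerivAt_phase (A B x y : ℝ) :
    HasDerivAt (phase A B x) (-satDrift A y + (x - y) / B) y := by
  have hprim : HasDerivAt (fun u => ∫ v in (0:ℝ)..u, satDrift A v) (satDrift A y) y :=
    (continuous_satDrift A).integral_hasStrictDerivAt 0 y |>.hasDerivAt
  have hquad : HasDerivAt (fun u => (x - u) ^ 2 / (2 * B)) (-(x - y) / B) y := by
    refine ((((hasDerivAt_id' y).const_sub x).pow 2).div_const (2 * B)).congr_deriv ?_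
    ring
  exact (hprim.neg.sub hquad).congr_deriv (by ring)

theorem differentiable_phase (A B x : ℝ) : Differentiable ℝ (phase A B x) :=
  fun y => (hasDerivAt_phase A B x y).differentiableAt

theorem deriv_phase_of_le_neg (hA : 0 < A) (hB : 0 < B) (hy : y ≤ -A) :
    deriv (phase A B x) y = (x - B - y) / B := by
  rw [(hasDerivAt_phase A B x y).deriv, satDrift_of_le_neg hA hy]
  field_simp
  ring

theorem deriv_phase_of_abs_le (hA : 0 < A) (hB : 0 < B) (hy : |y| ≤ A) :
    deriv (phase A B x) y = (y * (B - A) + x * A) / (A * B) := by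
  rw [(hasDerivAt_phase A B x y).deriv, satDrift_of_abs_le hA hy]
  field_simp
  ring

theorem deriv_phase_of_le (hA : 0 < A) (hB : 0 < B) (hy : A ≤ y) :
    deriv (phase A B x) y = (x + B - y) / B := by
  rw [(hasDerivAt_phase A B x y).deriv, satDrift_of_le hA hy]
  field_simp
  ring

theorem phase_add_sub_phase_sub (hA : 0 < A) (hleft : x - B ≤ -A) (hright : A ≤ x + B) :
    phase A B x (x + B) - phase A B x (x - B) = 2 * x := by
  have hint : ∀ c d : ℝ, IntervalIntegrable (satDrift A) volume c d :=
    (continuous_satDrift A).intervalIntegrable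
  have hsplit := intervalIntegral.integral_add_adjacent_intervals (hint 0 (x - B)) (hint _ (x + B))
  rw [integral_satDrift hA hleft hright] at hsplit
  simp only [phase]
  rw [show (x - (x + B)) ^ 2 = (x - (x - B)) ^ 2 by ring]
  linarith

theorem neg_mul_div_sub_mem_Ioo (hA : 0 < A) (hx : 0 < x) (hxAB : x < B - A) :
    -x * A / (B - A) ∈ Ioo (-A) 0 := by
  have hBA : 0 < B - A := by linarith
  constructor
  · rw [lt_div_iff₀ hBA]; nlinarith
  · exact div_neg_of_neg_of_pos (by nlinarith) hBA

theorem deriv_phase_pos_of_lt_sub (hA : 0 < A) (hx : 0 < x) (hxAB : x < B - A)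
    (hy : y < x - B) : 0 < deriv (phase A B x) y := by
  rw [deriv_phase_of_le_neg hA (by linarith) (by linarith)]
  exact div_pos (by linarith) (by linarith)

theorem deriv_phase_neg_of_sub_lt_of_lt (hA : 0 < A) (hx : 0 < x) (hxAB : x < B - A)
    (hy₁ : x - B < y) (hy₂ : y < -x * A / (B - A)) : deriv (phase A B x) y < 0 := by
  obtain ⟨-, hsaddle⟩ := neg_mul_div_sub_mem_Ioo hA hx hxAB
  rcases le_or_gt y (-A) with hyA | hyA
  · rw [deriv_phase_of_le_neg hA (by linarith) hyA]
    exact div_neg_of_neg_of_pos (by linarith) (by linarith)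
  · rw [deriv_phase_of_abs_le hA (by linarith) (abs_le.mpr ⟨hyA.le, by linarith⟩)]
    rw [lt_div_iff₀ (by linarith)] at hy₂
    exact div_neg_of_neg_of_pos (by linarith) (by nlinarith)

theorem deriv_phase_pos_of_lt_of_lt_add (hA : 0 < A) (hx : 0 < x) (hxAB : x < B - A)
    (hy₁ : -x * A / (B - A) < y) (hy₂ : y < x + B) : 0 < deriv (phase A B x) y := by
  obtain ⟨hsaddle, -⟩ := neg_mul_div_sub_mem_Ioo hA hx hxAB
  rcases le_or_gt A y with hyA | hyA
  · rw [deriv_phase_of_le hA (by linarith) hyA]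
    exact div_pos (by linarith) (by linarith)
  · rw [deriv_phase_of_abs_le hA (by linarith) (abs_le.mpr ⟨by linarith, hyA.le⟩)]
    rw [div_lt_iff₀ (by linarith)] at hy₁
    exact div_pos (by linarith) (by nlinarith)

theorem deriv_phase_neg_of_add_lt (hA : 0 < A) (hx : 0 < x) (hxAB : x < B - A)
    (hy : x + B < y) : deriv (phase A B x) y < 0 := by
  rw [deriv_phase_of_le hA (by linarith) (by linarith)]
  exact div_neg_of_neg_of_pos (by linarith) (by linarith)

theorem isMaxOn_phase_sub (hA : 0 < A) (hx : 0 < x) (hxAB : x < B - A) :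
    IsMaxOn (phase A B x) (Iic (-x * A / (B - A))) (x - B) := by
  obtain ⟨hsaddle, -⟩ := neg_mul_div_sub_mem_Ioo hA hx hxAB
  refine IsMaxOn.of_deriv_nonneg_of_nonpos (differentiable_phase A B x) (convex_Iic _)
    (by simp only [mem_Iic]; linarith) (fun y _ hy => ?_) (fun y hy hy' => ?_)
  · exact (deriv_phase_pos_of_lt_sub hA hx hxAB hy).le
  · rw [interior_Iic] at hy
    exact (deriv_phase_neg_of_sub_lt_of_lt hA hx hxAB hy' hy).le

theorem isMaxOn_phase_add (hA : 0 < A) (hx : 0 < x) (hxAB : x < B - A) :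
    IsMaxOn (phase A B x) (Ici (-x * A / (B - A))) (x + B) := by
  obtain ⟨-, hsaddle⟩ := neg_mul_div_sub_mem_Ioo hA hx hxAB
  refine IsMaxOn.of_deriv_nonneg_of_nonpos (differentiable_phase A B x) (convex_Ici _)
    (by simp only [mem_Ici]; linarith) (fun y hy hy' => ?_) (fun y _ hy => ?_)
  · rw [interior_Ici] at hy
    exact (deriv_phase_pos_of_lt_of_lt_add hA hx hxAB hy hy').le
  · exact (deriv_phase_neg_of_add_lt hA hx hxAB hy).le

end phase

theorem laplace_phase_function_analysis_general
    (δ : ℝ)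
    (r g : ℝ → ℝ)
    (hrδ : 0 < r δ)
    (hg : ∀ x, g x = if |x| ≤ r δ then -x / r δ else -Real.sign x)
    (t x : ℝ) (hx : 0 < x) (hx' : x < r t - r δ)
    (h : ℝ → ℝ)
    (hh : ∀ y : ℝ, h y = -(∫ v in (0:ℝ)..y, g v) - (x - y) ^ 2 / (2 * r t)) :
    (∀ y : ℝ, y < x - r t → 0 < deriv h y) ∧
    (∀ y : ℝ, x - r t < y → y < -x * r δ / (r t - r δ) → deriv h y < 0) ∧
    (∀ y : ℝ, -x * r δ / (r t - r δ) < y → y < x + r t → 0 < deriv h y) ∧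
    (∀ y : ℝ, x + r t < y → deriv h y < 0) ∧
    (∀ y : ℝ, y ≤ -x * r δ / (r t - r δ) → h y ≤ h (x - r t)) ∧
    (∀ y : ℝ, -x * r δ / (r t - r δ) ≤ y → h y ≤ h (x + r t)) ∧
    h (x + r t) - h (x - r t) = 2 * x := by
  obtain rfl : g = satDrift (r δ) := funext fun v => (hg v).trans (satDrift_eq_ite hrδ v).symm
  obtain rfl : h = phase (r δ) (r t) x := funext hh
  exact ⟨fun y => deriv_phase_pos_of_lt_sub hrδ hx hx',
    fun y => deriv_phase_neg_of_sub_lt_of_lt hrδ hx hx',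
    fun y => deriv_phase_pos_of_lt_of_lt_add hrδ hx hx',
    fun y => deriv_phase_neg_of_add_lt hrδ hx hx',
    fun y => isMaxOn_iff.mp (isMaxOn_phase_sub hrδ hx hx') y,
    fun y => isMaxOn_iff.mp (isMaxOn_phase_add hrδ hx hx') y,
    phase_add_sub_phase_sub hrδ (by linarith) (by linarith)⟩

/-- Analysis of `h(y) = −∫_0^y g − (x−y)²/(2r_t)` for `t ∈ [0,δ)` and `0 < x < r_t − r_δ`:
sign of `h'` on the four intervals determined by `y₁* = x − r_t`, `ȳ = −x·r_δ/(r_t − r_δ)`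
and `y₂* = x + r_t`, the global maximality of `y₁*` on `(−∞, ȳ]` and of `y₂*` on `[ȳ, ∞)`,
and the identity `h(y₂*) − h(y₁*) = 2x`. -/
theorem laplace_phase_function_analysis
    (T κ δ : ℝ) (hT : 0 < T) (hδ : δ ∈ Set.Ioo 0 T)
    (η w r g : ℝ → ℝ)
    (hη : ∀ t ∈ Set.Icc (0:ℝ) T,
      HasDerivWithinAt η (η t ^ 2 - 2 * κ * η t - 1) (Set.Icc (0:ℝ) T) t)
    (hηT : η T = 1)
    (hw : ∀ t, w t = Real.exp (∫ s in t..T, (-κ + η s)))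
    (hr : ∀ t, r t = ∫ s in t..T, ((w s) ^ 2)⁻¹)
    (hrδ : 0 < r δ)
    (hg : ∀ x, g x = if |x| ≤ r δ then -x / r δ else -Real.sign x)
    (t x : ℝ) (ht : t ∈ Set.Ico (0:ℝ) δ) (hx : 0 < x) (hx' : x < r t - r δ)
    (h : ℝ → ℝ)
    (hh : ∀ y : ℝ, h y = -(∫ v in (0:ℝ)..y, g v) - (x - y) ^ 2 / (2 * r t)) :
    (∀ y : ℝ, y < x - r t → 0 < deriv h y) ∧
    (∀ y : ℝ, x - r t < y → y < -x * r δ / (r t - r δ) → deriv h y < 0) ∧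
    (∀ y : ℝ, -x * r δ / (r t - r δ) < y → y < x + r t → 0 < deriv h y) ∧
    (∀ y : ℝ, x + r t < y → deriv h y < 0) ∧
    (∀ y : ℝ, y ≤ -x * r δ / (r t - r δ) → h y ≤ h (x - r t)) ∧
    (∀ y : ℝ, -x * r δ / (r t - r δ) ≤ y → h y ≤ h (x + r t)) ∧
    h (x + r t) - h (x - r t) = 2 * x :=
  laplace_phase_function_analysis_general δ r g hrδ hg t x hx hx' h hh
end

section
/- Fix t ∈ [0,δ) and x ∈ ℝ with 0 < x < r_t − r_δ, and define h(y) := −∫_0^y g(v) dv − (x−y)²/(2 r_t), q(y) := (x−y)/r_t + 1, y₂* := x + r_t and B₂ := −(r_t − r_δ + x)/√(2 r_t). Then for every λ ≥ 1, ∫_{−r_δ}^{r_δ} |q(y)|·exp(λ·h(y)) dy ≤ √(2π·r_t·r_δ/(λ·(r_t − r_δ)))·exp(λ·h(y₂*))·(exp(−2λx) + exp(−λ·B₂²)); moreover B₂² ≥ max(x²/(2 r_t), (r_t − r_δ)²/(2 r_t)). -/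
/-!
On `[-r_δ, r_δ]` the function `g` is linear, so `λ h` is a quadratic `φ` with leading coefficient
`a = λ (r_t - r_δ) / (2 r_t r_δ) > 0` and vertex `-x r_δ / (r_t - r_δ) ∈ [-r_δ, 0]`. On each side
of the vertex `φ y ≤ φ(endpoint) - a (y - endpoint)²`, so splitting the integral there bounds
`∫ e^φ` by `√(π/a)/2 · (e^{φ(-r_δ)} + e^{φ(r_δ)})`; moreover `|q| ≤ 2` on the interval.
Finally `φ(r_δ) = λ (h(y₂*) - B₂²)` exactly, while `φ(-r_δ)` falls short of `λ (h(y₂*) - 2x)`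
by `λ (r_t - x - r_δ)² / (2 r_t)`.
-/

open MeasureTheory Real Set intervalIntegral

theorem integral_exp_neg_mul_sq_le {c b : ℝ} (hc : 0 < c) (hb : 0 ≤ b) :
    ∫ u in (0 : ℝ)..b, exp (-c * u ^ 2) ≤ √(π / c) / 2 := by
  rw [integral_of_le hb, ← integral_gaussian_Ioi c]
  exact setIntegral_mono_set (integrable_exp_neg_mul_sq hc).integrableOn
    (.of_forall fun u => (exp_pos _).le) Ioc_subset_Ioi_self.eventuallyLE

theorem sq_sub_add_sq_sub_le {lo y hi : ℝ} (hlo : lo ≤ y) (hhi : y ≤ hi) :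
    (y - lo) ^ 2 + (hi - y) ^ 2 ≤ (hi - lo) ^ 2 := by
  nlinarith [mul_nonneg (sub_nonneg.2 hlo) (sub_nonneg.2 hhi)]

section ConvexQuadratic

variable {φ : ℝ → ℝ} {a y₀ : ℝ}

theorem continuous_of_eq_quadratic (hφ : ∀ y, φ y = φ y₀ + a * (y - y₀) ^ 2) :
    Continuous φ := by
  rw [funext hφ]; fun_prop

theorem integral_exp_le_of_quadratic_left {lo : ℝ} (ha : 0 < a) (hlo : lo ≤ y₀)
    (hφ : ∀ y, φ y = φ y₀ + a * (y - y₀) ^ 2) :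
    ∫ y in lo..y₀, exp (φ y) ≤ √(π / a) / 2 * exp (φ lo) := by
  have hφc := continuous_of_eq_quadratic hφ
  calc ∫ y in lo..y₀, exp (φ y)
      ≤ ∫ y in lo..y₀, exp (φ lo) * exp (-a * (y - lo) ^ 2) := by
        refine integral_mono_on hlo ((by fun_prop : Continuous _).intervalIntegrable _ _)
          ((by fun_prop : Continuous _).intervalIntegrable _ _) fun y hy => ?_
        rw [← exp_add, exp_le_exp, hφ y, hφ lo]
        nlinarith [mul_le_mul_of_nonneg_left (sq_sub_add_sq_sub_le hy.1 hy.2) ha.le]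
    _ = exp (φ lo) * ∫ u in (0 : ℝ)..y₀ - lo, exp (-a * u ^ 2) := by
        rw [intervalIntegral.integral_const_mul,
          integral_comp_sub_right (fun u => exp (-a * u ^ 2)), sub_self]
    _ ≤ exp (φ lo) * (√(π / a) / 2) := by
        gcongr; exact integral_exp_neg_mul_sq_le ha (sub_nonneg.2 hlo)
    _ = √(π / a) / 2 * exp (φ lo) := mul_comm _ _

theorem integral_exp_le_of_quadratic {lo hi : ℝ} (ha : 0 < a) (hlo : lo ≤ y₀)
    (hhi : y₀ ≤ hi) (hφ : ∀ y, φ y = φ y₀ + a * (y - y₀) ^ 2) :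
    ∫ y in lo..hi, exp (φ y) ≤ √(π / a) / 2 * (exp (φ lo) + exp (φ hi)) := by
  have hφc := continuous_of_eq_quadratic hφ
  have hint (u v : ℝ) : IntervalIntegrable (fun y => exp (φ y)) volume u v :=
    (by fun_prop : Continuous _).intervalIntegrable _ _
  rw [← integral_add_adjacent_intervals (hint lo y₀) (hint y₀ hi), mul_add]
  refine add_le_add (integral_exp_le_of_quadratic_left ha hlo hφ) ?_
  have hψ : ∀ u, φ (-u) = φ (-(-y₀)) + a * (u - -y₀) ^ 2 := fun u => by
    rw [neg_neg, hφ]; ring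
  have := integral_exp_le_of_quadratic_left (φ := fun u => φ (-u)) ha (neg_le_neg hhi) hψ
  simpa only [integral_comp_neg (fun u => exp (φ u)), neg_neg] using this

end ConvexQuadratic

theorem integral_abs_mul_exp_quadratic_le {D R x lam : ℝ} (hD : 0 < D) (hx : 0 < x)
    (hxR : x < R - D) (hlam : 0 < lam) :
    ∫ y in -D..D, |(x - y) / R + 1| * exp (lam * (y ^ 2 / (2 * D) - (x - y) ^ 2 / (2 * R))) ≤
      √(2 * π * R * D / (lam * (R - D))) *
        (exp (lam * (D / 2 - (x + D) ^ 2 / (2 * R))) +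
          exp (lam * (D / 2 - (x - D) ^ 2 / (2 * R)))) := by
  have hRD : 0 < R - D := by linarith
  have hR : 0 < R := by linarith
  set φ : ℝ → ℝ := fun y => lam * (y ^ 2 / (2 * D) - (x - y) ^ 2 / (2 * R))
  set a := lam * (R - D) / (2 * R * D)
  set y₀ := -(x * D) / (R - D)
  have hφ : ∀ y, φ y = φ y₀ + a * (y - y₀) ^ 2 := by
    intro y; simp only [φ, a, y₀]; field_simp; ring
  have hy₀ : -D ≤ y₀ ∧ y₀ ≤ 0 := by
    simp only [y₀]
    constructor
    · rw [neg_div, neg_le_neg_iff, div_le_iff₀ hRD]; nlinarith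
    · exact div_nonpos_of_nonpos_of_nonneg (by nlinarith) hRD.le
  have hq : ∀ y ∈ Icc (-D) D, |(x - y) / R + 1| ≤ 2 := fun y hy => by
    have h₁ : -1 ≤ (x - y) / R := by rw [le_div_iff₀ hR]; linarith [hy.2]
    have h₂ : (x - y) / R ≤ 1 := by rw [div_le_iff₀ hR]; linarith [hy.1]
    exact abs_le.2 ⟨by linarith, by linarith⟩
  have hφD : φ (-D) = lam * (D / 2 - (x + D) ^ 2 / (2 * R)) ∧
      φ D = lam * (D / 2 - (x - D) ^ 2 / (2 * R)) := by
    constructor <;> · simp only [φ, sub_neg_eq_add]; field_simp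
  have hconst : √(π / a) = √(2 * π * R * D / (lam * (R - D))) := by
    congr 1; simp only [a]; field_simp
  calc ∫ y in -D..D, |(x - y) / R + 1| * exp (φ y)
      ≤ ∫ y in -D..D, 2 * exp (φ y) :=
        integral_mono_on (by linarith) ((by fun_prop : Continuous _).intervalIntegrable _ _)
          ((by fun_prop : Continuous _).intervalIntegrable _ _)
          fun y hy => mul_le_mul_of_nonneg_right (hq y hy) (exp_pos _).le
    _ ≤ 2 * (√(π / a) / 2 * (exp (φ (-D)) + exp (φ D))) := by
        rw [intervalIntegral.integral_const_mul]
        gcongr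
        exact integral_exp_le_of_quadratic (by positivity) hy₀.1 (by linarith) hφ
    _ = _ := by rw [hconst, hφD.1, hφD.2]; ring

/-- The function `g` of the statement: `v ↦ -clamp (v / D) (-1) 1` when `0 < D`. -/
noncomputable def satRamp (D v : ℝ) : ℝ := if |v| ≤ D then -v / D else -Real.sign v

section satRamp

variable {D : ℝ}

theorem satRamp_of_abs_le {v : ℝ} (hv : |v| ≤ D) : satRamp D v = -v / D := if_pos hv

theorem satRamp_of_le (hD : 0 < D) {v : ℝ} (hv : D ≤ v) : satRamp D v = -1 := by
  rcases hv.eq_or_lt with rfl | hlt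
  · rw [satRamp_of_abs_le (abs_of_pos hD).le, neg_div, div_self hD.ne']
  · rw [satRamp, if_neg (by rw [abs_of_pos (hD.trans hlt)]; exact hlt.not_ge),
      Real.sign_of_pos (hD.trans hlt)]

theorem integral_satRamp_of_abs_le {y : ℝ} (hy : |y| ≤ D) :
    ∫ v in (0 : ℝ)..y, satRamp D v = -(y ^ 2 / (2 * D)) := by
  have hEq : EqOn (satRamp D) (fun v => -v / D) (uIcc 0 y) := fun v hv =>
    satRamp_of_abs_le (by simpa using (abs_sub_left_of_mem_uIcc hv).trans (by simpa using hy))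
  rw [integral_congr hEq]
  simp only [neg_div, intervalIntegral.integral_neg, intervalIntegral.integral_div, integral_id]
  ring

theorem integral_satRamp_of_le (hD : 0 < D) {y : ℝ} (hy : D ≤ y) :
    ∫ v in (0 : ℝ)..y, satRamp D v = D / 2 - y := by
  have hEq : EqOn (fun v => -v / D) (satRamp D) (Ioc 0 D) := fun v hv =>
    (satRamp_of_abs_le (abs_le.2 ⟨by linarith [hv.1], hv.2⟩)).symm
  have hint₁ : IntervalIntegrable (satRamp D) volume 0 D :=
    ((by fun_prop : Continuous fun v : ℝ => -v / D).intervalIntegrable _ _).congr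
      (by rwa [uIoc_of_le hD.le])
  have hconst : EqOn (satRamp D) (fun _ => -1) (uIcc D y) := fun v hv =>
    satRamp_of_le hD (uIcc_of_le hy ▸ hv).1
  have hint₂ : IntervalIntegrable (satRamp D) volume D y :=
    (intervalIntegrable_const (c := (-1 : ℝ))).congr ((hconst.mono uIoc_subset_uIcc).symm)
  rw [← integral_add_adjacent_intervals hint₁ hint₂, integral_congr hconst,
    integral_satRamp_of_abs_le (abs_of_pos hD).le, intervalIntegral.integral_const, smul_eq_mul]
  field_simp
  ring

end satRamp

theorem max_sq_div_le_add_sq_div {a b c : ℝ} (ha : 0 ≤ a) (hb : 0 ≤ b) (hc : 0 ≤ c) :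
    max (a ^ 2 / c) (b ^ 2 / c) ≤ (a + b) ^ 2 / c :=
  max_le (by gcongr; linarith) (by gcongr; linarith)

theorem laplace_middle_integral_bound_general
    (δ : ℝ)
    (r g : ℝ → ℝ)
    (hrδ : 0 < r δ)
    (hg : ∀ x, g x = if |x| ≤ r δ then -x / r δ else -Real.sign x)
    (t x : ℝ) (hx : 0 < x) (hx' : x < r t - r δ)
    (h q : ℝ → ℝ)
    (hh : ∀ y : ℝ, h y = -(∫ v in (0:ℝ)..y, g v) - (x - y) ^ 2 / (2 * r t))
    (hq : ∀ y : ℝ, q y = (x - y) / r t + 1)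
    (B₂ : ℝ) (hB₂ : B₂ = -((r t - r δ + x) / Real.sqrt (2 * r t))) :
    ∀ lam : ℝ, 1 ≤ lam →
      (∫ y in (-(r δ))..(r δ), |q y| * Real.exp (lam * h y)) ≤
        Real.sqrt (2 * Real.pi * r t * r δ / (lam * (r t - r δ))) *
          Real.exp (lam * h (x + r t)) *
          (Real.exp (-(2 * lam * x)) + Real.exp (-(lam * B₂ ^ 2))) ∧
      max (x ^ 2 / (2 * r t)) ((r t - r δ) ^ 2 / (2 * r t)) ≤ B₂ ^ 2 := by
  intro lam hlam
  obtain rfl : g = satRamp (r δ) := funext hg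
  set D := r δ
  set R := r t
  have hR : 0 < R := by linarith
  have hB₂sq : B₂ ^ 2 = (R - D + x) ^ 2 / (2 * R) := by
    rw [hB₂, neg_sq, div_pow, sq_sqrt (by positivity)]
  refine ⟨?_, by
    rw [hB₂sq, add_comm]; exact max_sq_div_le_add_sq_div hx.le (by linarith) (by positivity)⟩
  have hh_inner : ∀ y ∈ uIcc (-D) D, h y = y ^ 2 / (2 * D) - (x - y) ^ 2 / (2 * R) :=
    fun y hy => by
      rw [uIcc_of_le (by linarith)] at hy
      rw [hh, integral_satRamp_of_abs_le (abs_le.2 hy)]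
      ring
  have hh_peak : h (x + R) = x + R / 2 - D / 2 := by
    rw [hh, integral_satRamp_of_le hrδ (by linarith)]; field_simp; ring
  have hleft : D / 2 - (x + D) ^ 2 / (2 * R) ≤ h (x + R) - 2 * x := by
    rw [hh_peak, ← sub_nonneg]
    convert (by positivity : 0 ≤ (R - x - D) ^ 2 / (2 * R)) using 1
    field_simp; ring
  have hright : D / 2 - (x - D) ^ 2 / (2 * R) = h (x + R) - B₂ ^ 2 := by
    rw [hh_peak, hB₂sq]; field_simp; ring
  calc ∫ y in -D..D, |q y| * exp (lam * h y)
      = ∫ y in -D..D, |(x - y) / R + 1| *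
          exp (lam * (y ^ 2 / (2 * D) - (x - y) ^ 2 / (2 * R))) :=
        integral_congr fun y hy => by rw [hq, hh_inner y hy]
    _ ≤ √(2 * π * R * D / (lam * (R - D))) *
          (exp (lam * h (x + R) + -(2 * lam * x)) + exp (lam * h (x + R) + -(lam * B₂ ^ 2))) := by
        refine (integral_abs_mul_exp_quadratic_le hrδ hx hx' (by linarith)).trans ?_
        rw [hright]
        gcongr ?_ * (exp ?_ + exp ?_)
        · nlinarith
        · linarith
    _ = _ := by rw [exp_add, exp_add]; ring

/-- Bound for the middle integral in the Laplace-method estimate: for `λ ≥ 1`,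
`∫_{−r_δ}^{r_δ} |q(y)|·e^{λh(y)} dy ≤ √(2π r_t r_δ/(λ(r_t−r_δ)))·e^{λh(y₂*)}·(e^{−2λx} + e^{−λB₂²})`,
together with `B₂² ≥ max(x²/(2r_t), (r_t−r_δ)²/(2r_t))`. -/
theorem laplace_middle_integral_bound
    (T κ δ : ℝ) (hT : 0 < T) (hδ : δ ∈ Set.Ioo 0 T)
    (η w r g : ℝ → ℝ)
    (hη : ∀ t ∈ Set.Icc (0:ℝ) T,
      HasDerivWithinAt η (η t ^ 2 - 2 * κ * η t - 1) (Set.Icc (0:ℝ) T) t)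
    (hηT : η T = 1)
    (hw : ∀ t, w t = Real.exp (∫ s in t..T, (-κ + η s)))
    (hr : ∀ t, r t = ∫ s in t..T, ((w s) ^ 2)⁻¹)
    (hrδ : 0 < r δ)
    (hg : ∀ x, g x = if |x| ≤ r δ then -x / r δ else -Real.sign x)
    (t x : ℝ) (ht : t ∈ Set.Ico (0:ℝ) δ) (hx : 0 < x) (hx' : x < r t - r δ)
    (h q : ℝ → ℝ)
    (hh : ∀ y : ℝ, h y = -(∫ v in (0:ℝ)..y, g v) - (x - y) ^ 2 / (2 * r t))
    (hq : ∀ y : ℝ, q y = (x - y) / r t + 1)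
    (B₂ : ℝ) (hB₂ : B₂ = -((r t - r δ + x) / Real.sqrt (2 * r t))) :
    ∀ lam : ℝ, 1 ≤ lam →
      (∫ y in (-(r δ))..(r δ), |q y| * Real.exp (lam * h y)) ≤
        Real.sqrt (2 * Real.pi * r t * r δ / (lam * (r t - r δ))) *
          Real.exp (lam * h (x + r t)) *
          (Real.exp (-(2 * lam * x)) + Real.exp (-(lam * B₂ ^ 2))) ∧
      max (x ^ 2 / (2 * r t)) ((r t - r δ) ^ 2 / (2 * r t)) ≤ B₂ ^ 2 :=
  laplace_middle_integral_bound_general δ r g hrδ hg t x hx hx' h q hh hq B₂ hB₂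
end

section
/- Let σ₀ ∈ (0,1). Let g̃ : ℝ → ℝ be bounded and Lipschitz continuous with g̃ ≥ g pointwise. Suppose θ̃ and θ̂ are bounded functions on [0,T] × ℝ, of class C^{1,2} on [0,T) × ℝ, continuous on [0,T] × ℝ, Lipschitz continuous in x uniformly in t, satisfying the equation ∂_t u(t,x) − w_t^{−2}·u(t,x)·∂_x u(t,x) + (1/2)·σ₀²·w_t^{−2}·∂²_{xx} u(t,x) = 0 on [0,T) × ℝ, with terminal conditions θ̃(T,·) = g̃ and θ̂(T,·) = g. Then θ̃(t,x) ≥ θ̂(t,x) for all (t,x) ∈ [0,T] × ℝ. -/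
open MeasureTheory

section BurgersHelpers
open Set Filter Topology


lemma abs_le_of_hasDerivAt_lipschitz {f : ℝ → ℝ} {K : NNReal} (hl : LipschitzWith K f)
    {x f' : ℝ} (hd : HasDerivAt f f' x) : |f'| ≤ K := by
  have h := (hasDerivAt_iff_tendsto_slope.1 hd).abs
  refine le_of_tendsto h ?_
  filter_upwards [self_mem_nhdsWithin] with y (hy : y ≠ x)
  have hxy : (0:ℝ) < |y - x| := by simp [sub_eq_zero, hy]
  rw [slope_def_field, abs_div, div_le_iff₀ hxy]
  simpa [Real.dist_eq] using hl.dist_le_mul y x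

lemma second_deriv_nonneg_at_min {f f' : ℝ → ℝ} {x₀ c : ℝ}
    (hd : ∀ y, HasDerivAt f (f' y) y) (hd2 : HasDerivAt f' c x₀)
    (hmin : ∀ y, f x₀ ≤ f y) : 0 ≤ c := by
  by_contra hc
  push_neg at hc
  have hloc : IsLocalMin f x₀ := Filter.Eventually.of_forall fun y => hmin y
  have hf'0 : f' x₀ = 0 := hloc.hasDerivAt_eq_zero (hd x₀)
  have hslope : Tendsto (slope f' x₀) (𝓝[>] x₀) (𝓝 c) :=
    (hasDerivAt_iff_tendsto_slope.1 hd2).mono_left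
      (nhdsWithin_mono _ fun y hy => ne_of_gt hy)
  have hev : ∀ᶠ y in 𝓝[>] x₀, slope f' x₀ y < c / 2 :=
    hslope.eventually_lt_const (by linarith)
  obtain ⟨b, hb, hsub⟩ := (mem_nhdsGT_iff_exists_Ioo_subset).1 hev
  have hbx : x₀ < b := hb
  -- f' is negative on Ioo x₀ b
  have hneg : ∀ y ∈ Ioo x₀ b, f' y < 0 := by
    intro y hy
    have h1 := hsub hy
    have h2 : slope f' x₀ y < c / 2 := h1
    rw [slope_def_field, hf'0, sub_zero] at h2
    have hyx : 0 < y - x₀ := sub_pos.2 hy.1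
    have := (div_lt_iff₀ hyx).1 h2
    nlinarith
  -- f is strictly decreasing on [x₀, (x₀+b)/2]
  have hmid : x₀ < (x₀ + b) / 2 := by linarith
  have hmid2 : (x₀ + b) / 2 < b := by linarith
  have hanti : StrictAntiOn f (Icc x₀ ((x₀ + b) / 2)) := by
    apply strictAntiOn_of_deriv_neg (convex_Icc _ _)
    · exact (continuous_iff_continuousAt.2 fun y => (hd y).continuousAt).continuousOn
    · intro y hy
      rw [interior_Icc] at hy
      rw [(hd y).deriv]
      exact hneg y ⟨hy.1, lt_trans hy.2 hmid2⟩
  have := hanti (left_mem_Icc.2 (le_of_lt hmid)) (right_mem_Icc.2 (le_of_lt hmid)) hmid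
  exact absurd (hmin ((x₀ + b) / 2)) (not_le.2 this)

lemma derivWithin_nonneg_at_min {f : ℝ → ℝ} {t₀ T c : ℝ} (hT : t₀ < T) {s : Set ℝ}
    (hd : HasDerivWithinAt f c s t₀) (hsub : Ioo t₀ T ⊆ s)
    (hmin : ∀ t ∈ Ioo t₀ T, f t₀ ≤ f t) : 0 ≤ c := by
  have hd' : HasDerivWithinAt f c (Ioo t₀ T) t₀ := hd.mono hsub
  have hne : t₀ ∉ Ioo t₀ T := fun h => lt_irrefl _ h.1
  have hslope := (hasDerivWithinAt_iff_tendsto_slope' hne).1 hd'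
  haveI : (𝓝[Ioo t₀ T] t₀).NeBot := by
    apply mem_closure_iff_nhdsWithin_neBot.1
    rw [closure_Ioo (ne_of_lt hT)]
    exact ⟨le_refl _, le_of_lt hT⟩
  refine ge_of_tendsto hslope ?_
  filter_upwards [self_mem_nhdsWithin] with y hy
  rw [slope_def_field]
  have h1 : 0 < y - t₀ := sub_pos.2 hy.1
  exact div_nonneg (by linarith [hmin y hy]) (le_of_lt h1)


end BurgersHelpers

set_option maxHeartbeats 1000000

/-- Comparison principle for the viscous Burgers-type equation: if `g̃ ≥ g` and `θ̃, θ̂`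
are two classical solutions with terminal conditions `g̃` and `g` respectively,
then `θ̃ ≥ θ̂` on `[0,T] × ℝ`. -/
theorem burgers_comparison_principle
    (T κ δ σ₀ : ℝ) (hT : 0 < T) (hδ : δ ∈ Set.Ioo 0 T) (hσ₀ : σ₀ ∈ Set.Ioo (0:ℝ) 1)
    (η w r g : ℝ → ℝ)
    (hη : ∀ t ∈ Set.Icc (0:ℝ) T,
      HasDerivWithinAt η (η t ^ 2 - 2 * κ * η t - 1) (Set.Icc (0:ℝ) T) t)
    (hηT : η T = 1)
    (hw : ∀ t, w t = Real.exp (∫ s in t..T, (-κ + η s)))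
    (hr : ∀ t, r t = ∫ s in t..T, ((w s) ^ 2)⁻¹)
    (hrδ : 0 < r δ)
    (hg : ∀ x, g x = if |x| ≤ r δ then -x / r δ else -Real.sign x)
    -- the modified terminal condition g̃ : bounded, Lipschitz, above g
    (gt : ℝ → ℝ) (Mg : ℝ) (hgtbd : ∀ x, |gt x| ≤ Mg)
    (Kg : NNReal) (hgtlip : LipschitzWith Kg gt)
    (hge : ∀ x, g x ≤ gt x)
    -- the two classical solutions θ̃ = θ₁ and θ̂ = θ₂, with their derivatives
    (θ₁ θ₂ θ₁t θ₁x θ₁xx θ₂t θ₂x θ₂xx : ℝ → ℝ → ℝ)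
    (M₁ : ℝ) (hbd₁ : ∀ t ∈ Set.Icc (0:ℝ) T, ∀ x : ℝ, |θ₁ t x| ≤ M₁)
    (M₂ : ℝ) (hbd₂ : ∀ t ∈ Set.Icc (0:ℝ) T, ∀ x : ℝ, |θ₂ t x| ≤ M₂)
    (hcont₁ : ContinuousOn (fun p : ℝ × ℝ => θ₁ p.1 p.2) (Set.Icc (0:ℝ) T ×ˢ Set.univ))
    (hcont₂ : ContinuousOn (fun p : ℝ × ℝ => θ₂ p.1 p.2) (Set.Icc (0:ℝ) T ×ˢ Set.univ))
    (K₁ : NNReal) (hlip₁ : ∀ t ∈ Set.Icc (0:ℝ) T, LipschitzWith K₁ (θ₁ t))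
    (K₂ : NNReal) (hlip₂ : ∀ t ∈ Set.Icc (0:ℝ) T, LipschitzWith K₂ (θ₂ t))
    (hder₁ : ∀ t ∈ Set.Ico (0:ℝ) T, ∀ x : ℝ,
      HasDerivWithinAt (fun s => θ₁ s x) (θ₁t t x) (Set.Ico (0:ℝ) T) t ∧
      HasDerivAt (fun y => θ₁ t y) (θ₁x t x) x ∧
      HasDerivAt (fun y => θ₁x t y) (θ₁xx t x) x)
    (hder₂ : ∀ t ∈ Set.Ico (0:ℝ) T, ∀ x : ℝ,
      HasDerivWithinAt (fun s => θ₂ s x) (θ₂t t x) (Set.Ico (0:ℝ) T) t ∧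
      HasDerivAt (fun y => θ₂ t y) (θ₂x t x) x ∧
      HasDerivAt (fun y => θ₂x t y) (θ₂xx t x) x)
    (hpde₁ : ∀ t ∈ Set.Ico (0:ℝ) T, ∀ x : ℝ,
      θ₁t t x - ((w t) ^ 2)⁻¹ * θ₁ t x * θ₁x t x
        + 1 / 2 * σ₀ ^ 2 * ((w t) ^ 2)⁻¹ * θ₁xx t x = 0)
    (hpde₂ : ∀ t ∈ Set.Ico (0:ℝ) T, ∀ x : ℝ,
      θ₂t t x - ((w t) ^ 2)⁻¹ * θ₂ t x * θ₂x t x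
        + 1 / 2 * σ₀ ^ 2 * ((w t) ^ 2)⁻¹ * θ₂xx t x = 0)
    (hterm₁ : ∀ x : ℝ, θ₁ T x = gt x)
    (hterm₂ : ∀ x : ℝ, θ₂ T x = g x) :
    ∀ t ∈ Set.Icc (0:ℝ) T, ∀ x : ℝ, θ₂ t x ≤ θ₁ t x := by
  -- nonnegativity of the bounds
  have hM₁ : 0 ≤ M₁ := le_trans (abs_nonneg _) (hbd₁ 0 ⟨le_refl 0, le_of_lt hT⟩ 0)
  have hM₂ : 0 ≤ M₂ := le_trans (abs_nonneg _) (hbd₂ 0 ⟨le_refl 0, le_of_lt hT⟩ 0)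
  have hK₂0 : (0:ℝ) ≤ (K₂:ℝ) := K₂.coe_nonneg
  -- a uniform bound W on ((w t)^2)⁻¹
  obtain ⟨W, hWpos, hWb⟩ : ∃ W : ℝ, 0 < W ∧ ∀ t ∈ Set.Icc (0:ℝ) T,
      0 < ((w t)^2)⁻¹ ∧ ((w t)^2)⁻¹ ≤ W := by
    have ηcont : ContinuousOn η (Set.Icc 0 T) := fun t ht => (hη t ht).continuousWithinAt
    obtain ⟨C, hC⟩ := isCompact_Icc.exists_bound_of_continuousOn ηcont
    refine ⟨Real.exp (2 * ((|κ| + C) * T)), Real.exp_pos _, fun t ht => ?_⟩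
    have hI : |∫ s in t..T, (-κ + η s)| ≤ (|κ| + C) * T := by
      have h1 : ‖∫ s in t..T, (-κ + η s)‖ ≤ (|κ| + C) * |T - t| := by
        apply intervalIntegral.norm_integral_le_of_norm_le_const
        intro x hx
        rw [Set.uIoc_of_le ht.2] at hx
        have hx' : x ∈ Set.Icc 0 T := ⟨le_trans ht.1 (le_of_lt hx.1), hx.2⟩
        have := hC x hx'
        rw [Real.norm_eq_abs] at this ⊢
        calc |(-κ + η x)| ≤ |κ| + |η x| := by rw [← abs_neg κ]; exact abs_add_le _ _
          _ ≤ |κ| + C := by linarith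
      rw [Real.norm_eq_abs] at h1
      refine le_trans h1 ?_
      have hC0' : 0 ≤ C := le_trans (norm_nonneg _) (hC 0 ⟨le_refl 0, le_of_lt hT⟩)
      have hC0 : 0 ≤ |κ| + C := by linarith [abs_nonneg κ]
      have : |T - t| ≤ T := by rw [abs_of_nonneg (by linarith [ht.2])]; linarith [ht.1]
      exact mul_le_mul_of_nonneg_left this hC0
    have hwsq : (w t) ^ 2 = Real.exp (2 * ∫ s in t..T, (-κ + η s)) := by
      rw [hw t, sq, ← Real.exp_add]; ring_nf
    rw [hwsq, ← Real.exp_neg]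
    refine ⟨Real.exp_pos _, Real.exp_le_exp.2 ?_⟩
    have := abs_le.1 hI
    linarith [this.1, this.2]
  -- bound on the spatial derivative of θ₂
  have hK2 : ∀ t ∈ Set.Ico (0:ℝ) T, ∀ x : ℝ, |θ₂x t x| ≤ (K₂:ℝ) := fun t ht x =>
    abs_le_of_hasDerivAt_lipschitz (hlip₂ t (Set.Ico_subset_Icc_self ht)) (hder₂ t ht x).2.1
  set lam : ℝ := W * ((K₂:ℝ) + M₁ + 1) + 1 with hlam_def
  have hlam : 0 < lam := by nlinarith
  -- pointwise lower bound on the exponentially weighted difference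
  have hEb : ∀ t ∈ Set.Icc (0:ℝ) T, ∀ x : ℝ,
      -(M₁ + M₂) ≤ Real.exp (-lam * (T - t)) * (θ₁ t x - θ₂ t x) := by
    intro t ht x
    have h1 : Real.exp (-lam * (T - t)) ≤ 1 :=
      Real.exp_le_one_iff.2 (by nlinarith [ht.2])
    have h2 : (0:ℝ) < Real.exp (-lam * (T - t)) := Real.exp_pos _
    have h3 := abs_le.1 (hbd₁ t ht x)
    have h4 := abs_le.1 (hbd₂ t ht x)
    have h5 : 0 ≤ Real.exp (-lam * (T - t)) * ((θ₁ t x - θ₂ t x) + (M₁ + M₂)) :=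
      mul_nonneg (le_of_lt h2) (by linarith)
    have h6 : 0 ≤ (1 - Real.exp (-lam * (T - t))) * (M₁ + M₂) :=
      mul_nonneg (by linarith) (by linarith)
    nlinarith
  -- the key positivity claim
  have key : ∀ ε : ℝ, 0 < ε → ∀ t ∈ Set.Icc (0:ℝ) T, ∀ x : ℝ,
      0 < Real.exp (-lam * (T - t)) * (θ₁ t x - θ₂ t x) + ε * (1 + x ^ 2) := by
    intro ε hε
    by_contra hbad
    push_neg at hbad
    obtain ⟨t', ht', x', hzx'⟩ := hbad
    set R : ℝ := Real.sqrt ((M₁ + M₂) / ε) with hR_def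
    have hR0 : 0 ≤ R := Real.sqrt_nonneg _
    have hRsq : R ^ 2 = (M₁ + M₂) / ε := Real.sq_sqrt (by positivity)
    -- any nonpositive point of z has |x| ≤ R
    have hxin : ∀ t ∈ Set.Icc (0:ℝ) T, ∀ x : ℝ,
        Real.exp (-lam * (T - t)) * (θ₁ t x - θ₂ t x) + ε * (1 + x ^ 2) ≤ 0 → |x| ≤ R := by
      intro t ht x hzx
      rw [← Real.sqrt_sq_eq_abs]
      apply Real.sqrt_le_sqrt
      rw [le_div_iff₀ hε]
      nlinarith [hEb t ht x]
    have hin : (t', x') ∈ Set.Icc (0:ℝ) T ×ˢ Set.Icc (-R) R := by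
      refine ⟨ht', ?_⟩
      rw [Set.mem_Icc, ← abs_le]
      exact hxin t' ht' x' hzx'
    have cpt : IsCompact (Set.Icc (0:ℝ) T ×ˢ Set.Icc (-R) R) :=
      isCompact_Icc.prod isCompact_Icc
    have zcont : ContinuousOn
        (fun p : ℝ × ℝ => Real.exp (-lam * (T - p.1)) * (θ₁ p.1 p.2 - θ₂ p.1 p.2)
          + ε * (1 + p.2 ^ 2)) (Set.Icc (0:ℝ) T ×ˢ (Set.univ : Set ℝ)) := by
      have c1 : Continuous fun p : ℝ × ℝ => Real.exp (-lam * (T - p.1)) :=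
        Real.continuous_exp.comp (continuous_const.mul (continuous_const.sub continuous_fst))
      have c2 : Continuous fun p : ℝ × ℝ => ε * (1 + p.2 ^ 2) :=
        continuous_const.mul (continuous_const.add (continuous_snd.pow 2))
      exact (c1.continuousOn.mul (hcont₁.sub hcont₂)).add c2.continuousOn
    obtain ⟨⟨t₀, x₀⟩, hK0, hminOn⟩ := cpt.exists_isMinOn ⟨(t', x'), hin⟩
      (zcont.mono (Set.prod_mono subset_rfl (Set.subset_univ _)))
    have hminK : ∀ t ∈ Set.Icc (0:ℝ) T, ∀ x ∈ Set.Icc (-R) R,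
        Real.exp (-lam * (T - t₀)) * (θ₁ t₀ x₀ - θ₂ t₀ x₀) + ε * (1 + x₀ ^ 2) ≤
        Real.exp (-lam * (T - t)) * (θ₁ t x - θ₂ t x) + ε * (1 + x ^ 2) := by
      intro t ht x hx
      exact isMinOn_iff.1 hminOn (t, x) ⟨ht, hx⟩
    have ht₀I : t₀ ∈ Set.Icc (0:ℝ) T := hK0.1
    have hz0 : Real.exp (-lam * (T - t₀)) * (θ₁ t₀ x₀ - θ₂ t₀ x₀) + ε * (1 + x₀ ^ 2) ≤ 0 :=
      le_trans (hminK t' ht' x' hin.2) hzx'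
    -- the minimum is global
    have hglob : ∀ t ∈ Set.Icc (0:ℝ) T, ∀ x : ℝ,
        Real.exp (-lam * (T - t₀)) * (θ₁ t₀ x₀ - θ₂ t₀ x₀) + ε * (1 + x₀ ^ 2) ≤
        Real.exp (-lam * (T - t)) * (θ₁ t x - θ₂ t x) + ε * (1 + x ^ 2) := by
      intro t ht x
      by_cases hx : |x| ≤ R
      · exact hminK t ht x (by rw [Set.mem_Icc, ← abs_le]; exact hx)
      · push_neg at hx
        have h1 : R ^ 2 < x ^ 2 := by
          have := sq_abs x
          nlinarith [abs_nonneg x]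
        have h2 : M₁ + M₂ < ε * x ^ 2 := by
          rw [hRsq] at h1
          rw [div_lt_iff₀ hε] at h1
          linarith
        have h3 := hEb t ht x
        linarith [hz0]
    -- t₀ < T
    have ht₀T : t₀ < T := by
      rcases lt_or_eq_of_le ht₀I.2 with h | h
      · exact h
      · exfalso
        rw [h] at hz0
        rw [sub_self, mul_zero, Real.exp_zero, one_mul, hterm₁, hterm₂] at hz0
        nlinarith [hge x₀, sq_nonneg x₀]
    have ht₀ : t₀ ∈ Set.Ico (0:ℝ) T := ⟨ht₀I.1, ht₀T⟩
    -- spatial derivative facts at the minimum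
    have hdx : ∀ y : ℝ, HasDerivAt
        (fun y => Real.exp (-lam * (T - t₀)) * (θ₁ t₀ y - θ₂ t₀ y) + ε * (1 + y ^ 2))
        (Real.exp (-lam * (T - t₀)) * (θ₁x t₀ y - θ₂x t₀ y) + ε * (2 * y)) y := by
      intro y
      have p1 := ((hder₁ t₀ ht₀ y).2.1.sub (hder₂ t₀ ht₀ y).2.1).const_mul
        (Real.exp (-lam * (T - t₀)))
      have p2 : HasDerivAt (fun y : ℝ => ε * (1 + y ^ 2)) (ε * (2 * y)) y := by
        simpa using ((hasDerivAt_pow 2 y).const_add (1:ℝ)).const_mul ε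
      exact p1.add p2
    have hdx2 : HasDerivAt
        (fun y => Real.exp (-lam * (T - t₀)) * (θ₁x t₀ y - θ₂x t₀ y) + ε * (2 * y))
        (Real.exp (-lam * (T - t₀)) * (θ₁xx t₀ x₀ - θ₂xx t₀ x₀) + ε * 2) x₀ := by
      have p1 := ((hder₁ t₀ ht₀ x₀).2.2.sub (hder₂ t₀ ht₀ x₀).2.2).const_mul
        (Real.exp (-lam * (T - t₀)))
      have p2 : HasDerivAt (fun y : ℝ => ε * (2 * y)) (ε * 2) x₀ := by
        simpa using ((hasDerivAt_id x₀).const_mul (2:ℝ)).const_mul ε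
      exact p1.add p2
    have hminy : ∀ y : ℝ,
        Real.exp (-lam * (T - t₀)) * (θ₁ t₀ x₀ - θ₂ t₀ x₀) + ε * (1 + x₀ ^ 2) ≤
        Real.exp (-lam * (T - t₀)) * (θ₁ t₀ y - θ₂ t₀ y) + ε * (1 + y ^ 2) :=
      fun y => hglob t₀ ht₀I y
    have hc2 : 0 ≤ Real.exp (-lam * (T - t₀)) * (θ₁xx t₀ x₀ - θ₂xx t₀ x₀) + ε * 2 :=
      second_deriv_nonneg_at_min hdx hdx2 hminy
    have hfx0 : Real.exp (-lam * (T - t₀)) * (θ₁x t₀ x₀ - θ₂x t₀ x₀) + ε * (2 * x₀) = 0 := by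
      have hloc : IsLocalMin
          (fun y => Real.exp (-lam * (T - t₀)) * (θ₁ t₀ y - θ₂ t₀ y) + ε * (1 + y ^ 2)) x₀ :=
        Filter.Eventually.of_forall fun y => hminy y
      exact hloc.hasDerivAt_eq_zero (hdx x₀)
    -- time derivative fact at the minimum
    have htime : 0 ≤ lam * (Real.exp (-lam * (T - t₀)) * (θ₁ t₀ x₀ - θ₂ t₀ x₀))
        + Real.exp (-lam * (T - t₀)) * (θ₁t t₀ x₀ - θ₂t t₀ x₀) := by
      have hinner : HasDerivAt (fun s : ℝ => -lam * (T - s)) (-lam * -1) t₀ := by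
        simpa using (((hasDerivAt_id t₀).const_sub T)).const_mul (-lam)
      have hexp := hinner.exp
      have hb : HasDerivWithinAt (fun s => θ₁ s x₀ - θ₂ s x₀)
          (θ₁t t₀ x₀ - θ₂t t₀ x₀) (Set.Ico (0:ℝ) T) t₀ :=
        (hder₁ t₀ ht₀ x₀).1.sub (hder₂ t₀ ht₀ x₀).1
      have hdt := (hexp.hasDerivWithinAt.mul hb).add_const (ε * (1 + x₀ ^ 2))
      have h0 := derivWithin_nonneg_at_min ht₀T hdt
        (fun s hs => ⟨le_trans ht₀I.1 (le_of_lt hs.1), hs.2⟩)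
        (fun s hs => hglob s ⟨le_trans ht₀I.1 (le_of_lt hs.1), le_of_lt hs.2⟩ x₀)
      nlinarith [h0]
    -- the PDE at the minimum point
    have e1 := hpde₁ t₀ ht₀ x₀
    have e2 := hpde₂ t₀ ht₀ x₀
    have hut : Real.exp (-lam * (T - t₀)) * (θ₁t t₀ x₀ - θ₂t t₀ x₀) =
        ((w t₀) ^ 2)⁻¹ * θ₁ t₀ x₀ *
            (Real.exp (-lam * (T - t₀)) * (θ₁x t₀ x₀ - θ₂x t₀ x₀))
          + ((w t₀) ^ 2)⁻¹ * θ₂x t₀ x₀ *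
            (Real.exp (-lam * (T - t₀)) * (θ₁ t₀ x₀ - θ₂ t₀ x₀))
          - 1 / 2 * σ₀ ^ 2 * ((w t₀) ^ 2)⁻¹ *
            (Real.exp (-lam * (T - t₀)) * (θ₁xx t₀ x₀ - θ₂xx t₀ x₀)) := by
      linear_combination (Real.exp (-lam * (T - t₀))) * e1 - (Real.exp (-lam * (T - t₀))) * e2
    -- bounds on the individual terms
    obtain ⟨hW₀pos, hW₀le⟩ := hWb t₀ ht₀I
    have hEpos : (0:ℝ) < Real.exp (-lam * (T - t₀)) := Real.exp_pos _
    have hθ₁b := abs_le.1 (hbd₁ t₀ ht₀I x₀)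
    have hθ₂xb := abs_le.1 (hK2 t₀ ht₀ x₀)
    have ha : Real.exp (-lam * (T - t₀)) * (θ₁ t₀ x₀ - θ₂ t₀ x₀) ≤ -(ε * (1 + x₀ ^ 2)) := by
      linarith [hz0]
    -- term 1
    have hb1 : ((w t₀) ^ 2)⁻¹ * θ₁ t₀ x₀ *
        (Real.exp (-lam * (T - t₀)) * (θ₁x t₀ x₀ - θ₂x t₀ x₀)) ≤ ε * (W * M₁ * (1 + x₀ ^ 2)) := by
      have hrw : Real.exp (-lam * (T - t₀)) * (θ₁x t₀ x₀ - θ₂x t₀ x₀) = -(ε * (2 * x₀)) := by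
        linarith [hfx0]
      rw [hrw]
      have habs : |((w t₀) ^ 2)⁻¹ * θ₁ t₀ x₀ * (ε * (2 * x₀))| ≤ W * M₁ * (ε * (2 * |x₀|)) := by
        rw [abs_mul, abs_mul]
        have h1 : |((w t₀) ^ 2)⁻¹| = ((w t₀) ^ 2)⁻¹ := abs_of_pos hW₀pos
        have h2 : |ε * (2 * x₀)| = ε * (2 * |x₀|) := by
          rw [abs_mul, abs_mul, abs_of_pos hε]
          norm_num
        rw [h1, h2]
        have := hbd₁ t₀ ht₀I x₀
        gcongr
        all_goals first | exact hW₀pos.le | positivity | assumption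
      have h2x : 2 * |x₀| ≤ 1 + x₀ ^ 2 := by nlinarith [sq_abs x₀, sq_nonneg (|x₀| - 1)]
      have hWM : 0 ≤ W * M₁ := mul_nonneg hWpos.le hM₁
      have h2x' : W * M₁ * (ε * (2 * |x₀|)) ≤ W * M₁ * (ε * (1 + x₀ ^ 2)) :=
        mul_le_mul_of_nonneg_left (mul_le_mul_of_nonneg_left h2x hε.le) hWM
      linarith [neg_abs_le (((w t₀) ^ 2)⁻¹ * θ₁ t₀ x₀ * (ε * (2 * x₀))), habs, h2x']
    -- term 2
    have hb2 : ((w t₀) ^ 2)⁻¹ * θ₂x t₀ x₀ *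
        (Real.exp (-lam * (T - t₀)) * (θ₁ t₀ x₀ - θ₂ t₀ x₀)) ≤
        W * (K₂:ℝ) * (-(Real.exp (-lam * (T - t₀)) * (θ₁ t₀ x₀ - θ₂ t₀ x₀))) := by
      have haneg : Real.exp (-lam * (T - t₀)) * (θ₁ t₀ x₀ - θ₂ t₀ x₀) ≤ 0 := by
        nlinarith [ha, sq_nonneg x₀]
      have habs : |((w t₀) ^ 2)⁻¹ * θ₂x t₀ x₀| ≤ W * (K₂:ℝ) := by
        rw [abs_mul, abs_of_pos hW₀pos]
        have := hK2 t₀ ht₀ x₀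
        gcongr
        all_goals first | exact hW₀pos.le | positivity | assumption
      calc ((w t₀) ^ 2)⁻¹ * θ₂x t₀ x₀ * (Real.exp (-lam * (T - t₀)) * (θ₁ t₀ x₀ - θ₂ t₀ x₀))
          ≤ |((w t₀) ^ 2)⁻¹ * θ₂x t₀ x₀ * (Real.exp (-lam * (T - t₀)) * (θ₁ t₀ x₀ - θ₂ t₀ x₀))| :=
            le_abs_self _
        _ = |((w t₀) ^ 2)⁻¹ * θ₂x t₀ x₀| *
            (-(Real.exp (-lam * (T - t₀)) * (θ₁ t₀ x₀ - θ₂ t₀ x₀))) := by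
            rw [abs_mul, abs_of_nonpos haneg]
        _ ≤ W * (K₂:ℝ) * (-(Real.exp (-lam * (T - t₀)) * (θ₁ t₀ x₀ - θ₂ t₀ x₀))) := by
            apply mul_le_mul_of_nonneg_right habs
            linarith
    -- term 3
    have hb3 : -(1 / 2 * σ₀ ^ 2 * ((w t₀) ^ 2)⁻¹ *
        (Real.exp (-lam * (T - t₀)) * (θ₁xx t₀ x₀ - θ₂xx t₀ x₀))) ≤ ε * W := by
      have hcp : 0 ≤ 1 / 2 * σ₀ ^ 2 * ((w t₀) ^ 2)⁻¹ := by positivity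
      have hσsq : σ₀ ^ 2 ≤ 1 := by nlinarith [hσ₀.1, hσ₀.2]
      have h5 : 1 / 2 * σ₀ ^ 2 * ((w t₀) ^ 2)⁻¹ ≤ 1 / 2 * W := by
        nlinarith [mul_le_mul hσsq hW₀le hW₀pos.le zero_le_one]
      have h6 : -(Real.exp (-lam * (T - t₀)) * (θ₁xx t₀ x₀ - θ₂xx t₀ x₀)) ≤ 2 * ε := by
        linarith [hc2]
      nlinarith [mul_le_mul_of_nonneg_left h6 hcp]
    -- assemble the contradiction
    have hc : (W * (M₁ + 1) + 1) * (Real.exp (-lam * (T - t₀)) * (θ₁ t₀ x₀ - θ₂ t₀ x₀)) ≤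
        (W * (M₁ + 1) + 1) * (-(ε * (1 + x₀ ^ 2))) :=
      mul_le_mul_of_nonneg_left ha (by positivity)
    have hq1 : 0 ≤ ε * (W * x₀ ^ 2) := by positivity
    have hq2 : 0 ≤ ε * x₀ ^ 2 := by positivity
    have hεW : 0 < ε * W := by positivity
    rw [hut] at htime
    rw [hlam_def] at htime
    linarith [htime, hb1, hb2, hb3, hc, hq1, hq2, hεW, hε]
  -- conclude
  intro t ht x
  by_contra hcon
  push_neg at hcon
  have hd : 0 < θ₂ t x - θ₁ t x := sub_pos.2 hcon
  have hEpos : (0:ℝ) < Real.exp (-lam * (T - t)) := Real.exp_pos _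
  have h1x : (0:ℝ) < 1 + x ^ 2 := by positivity
  set ε : ℝ := Real.exp (-lam * (T - t)) * (θ₂ t x - θ₁ t x) / (2 * (1 + x ^ 2)) with hε_def
  have hεpos : 0 < ε := by positivity
  have heq : ε * (1 + x ^ 2) = Real.exp (-lam * (T - t)) * (θ₂ t x - θ₁ t x) / 2 := by
    rw [hε_def]; field_simp
  have hk := key ε hεpos t ht x
  have hprod : 0 < Real.exp (-lam * (T - t)) * (θ₂ t x - θ₁ t x) := mul_pos hEpos hd
  nlinarith [hk, heq, hprod]
end

section
/- Define c_δ := (∫_{δ/2}^δ w_r^{−2} dr)/(2·∫_0^T w_r^{−2} dr), so that 0 < c_δ < 1/2. Then for every γ ∈ (0, c_δ) and every t ∈ [δ/2, T], one has (1−γ)·∫_{δ/2}^t w_s^{−2} ds ≥ max(r_δ − r_t, 0) + (1/2)·(r_{δ/2} − r_{min(t,δ)}). -/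
/-!
Only the tail integral `r t = ∫_t^T w⁻²` matters: since `w⁻² > 0` is continuous on `[0,T]`,
`r` is strictly decreasing there, every integral of `w⁻²` over a subinterval is a difference of
values of `r`, and `∫_0^T w⁻² = r 0 - r T`. The claim is then an inequality between values of a
decreasing function: for `t ≤ δ` it only needs `γ < 1/2`, and for `t ≥ δ` the loss
`γ ∫_{δ/2}^t w⁻² ≤ γ ∫_0^T w⁻²` is paid for by half of `∫_{δ/2}^δ w⁻²`, which is how
`c_δ` is chosen.
-/

open Set MeasureTheory

theorem continuousOn_intervalIntegral_left {g : ℝ → ℝ} {a b : ℝ} (hab : a ≤ b)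
    (hg : ContinuousOn g (Icc a b)) : ContinuousOn (fun t => ∫ s in t..b, g s) (Icc a b) := by
  rw [← uIcc_of_le hab] at hg ⊢
  exact intervalIntegral.continuousOn_primitive_interval_left
    (hg.integrableOn_compact isCompact_uIcc)

section TailIntegral

variable {f : ℝ → ℝ} {a b : ℝ}

theorem intervalIntegral_left_sub_left (hf : IntegrableOn f (Icc a b)) {x y : ℝ}
    (hx : x ∈ Icc a b) (hy : y ∈ Icc a b) :
    (∫ s in x..b, f s) - ∫ s in y..b, f s = ∫ s in x..y, f s := by
  have hint : ∀ {c d}, c ∈ Icc a b → d ∈ Icc a b → IntervalIntegrable f volume c d :=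
    fun hc hd => (hf.mono_set (uIcc_subset_Icc hc hd)).intervalIntegrable
  rw [← intervalIntegral.integral_add_adjacent_intervals (hint hx hy)
    (hint hy ⟨hx.1.trans hx.2, le_rfl⟩), add_sub_cancel_right]

theorem strictAntiOn_intervalIntegral_left (hf : IntegrableOn f (Icc a b))
    (hpos : ∀ x ∈ Ioo a b, 0 < f x) : StrictAntiOn (fun t => ∫ s in t..b, f s) (Icc a b) := by
  intro x hx y hy hxy
  rw [← sub_pos, intervalIntegral_left_sub_left hf hx hy]
  exact intervalIntegral.intervalIntegral_pos_of_pos_on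
    ((hf.mono_set (uIcc_subset_Icc hx hy)).intervalIntegrable)
    (fun s hs => hpos s ⟨hx.1.trans_lt hs.1, hs.2.trans_le hy.2⟩) hxy

end TailIntegral

section AntitoneTail

variable {R : ℝ → ℝ} {T δ : ℝ}

theorem max_sub_add_half_sub_le_of_antitoneOn (hR : AntitoneOn R (Icc 0 T)) (hδ : δ ∈ Ioo 0 T)
    {γ t : ℝ} (hγ : 0 ≤ γ) (hγD : γ * (R 0 - R T) < (R (δ / 2) - R δ) / 2)
    (ht : t ∈ Icc (δ / 2) T) :
    max (R δ - R t) 0 + 1 / 2 * (R (δ / 2) - R (min t δ)) ≤ (1 - γ) * (R (δ / 2) - R t) := by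
  obtain ⟨hδ0, hδT⟩ := hδ
  obtain ⟨htδ2, htT⟩ := ht
  have h0 : (0 : ℝ) ∈ Icc 0 T := ⟨le_rfl, by linarith⟩
  have hδ2 : δ / 2 ∈ Icc 0 T := ⟨by linarith, by linarith⟩
  have hδ' : δ ∈ Icc 0 T := ⟨hδ0.le, hδT.le⟩
  have hT : T ∈ Icc 0 T := ⟨by linarith, le_rfl⟩
  have ht : t ∈ Icc 0 T := ⟨by linarith, htT⟩
  have hR0 : R (δ / 2) ≤ R 0 := hR h0 hδ2 (by linarith)
  have hRTδ : R T ≤ R δ := hR hδ' hT hδT.le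
  have hRt : R t ≤ R (δ / 2) := hR hδ2 ht htδ2
  have hRT : R T ≤ R t := hR ht hT htT
  rcases le_total t δ with htδ | hδt
  · have hRδt : R δ ≤ R t := hR ht hδ' htδ
    -- `γ < 1/2` because `R (δ / 2) - R δ ≤ R 0 - R T`
    have hγ_half : γ < 1 / 2 := by
      by_contra! hγ_ge
      linarith [mul_le_mul_of_nonneg_right hγ_ge (by linarith : 0 ≤ R 0 - R T)]
    rw [min_eq_left htδ, max_eq_right (by linarith)]
    nlinarith
  · have hRtδ : R t ≤ R δ := hR hδ' ht hδt
    have hloss : γ * (R (δ / 2) - R t) ≤ γ * (R 0 - R T) :=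
      mul_le_mul_of_nonneg_left (by linarith) hγ
    rw [min_eq_right hδt, max_eq_left (by linarith)]
    linarith

theorem escape_rate_bound_of_strictAntiOn (hR : StrictAntiOn R (Icc 0 T)) (hδ : δ ∈ Ioo 0 T)
    {c : ℝ} (hc : c = (R (δ / 2) - R δ) / (2 * (R 0 - R T))) :
    0 < c ∧ c < 1 / 2 ∧ ∀ γ ∈ Ioo 0 c, ∀ t ∈ Icc (δ / 2) T,
      max (R δ - R t) 0 + 1 / 2 * (R (δ / 2) - R (min t δ)) ≤
        (1 - γ) * (R (δ / 2) - R t) := by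
  obtain ⟨hδ0, hδT⟩ := hδ
  have hδ2 : δ / 2 ∈ Icc 0 T := ⟨by linarith, by linarith⟩
  have hδ' : δ ∈ Icc 0 T := ⟨hδ0.le, hδT.le⟩
  have hB : R δ < R (δ / 2) := hR hδ2 hδ' (by linarith)
  have hBD : R (δ / 2) - R δ < R 0 - R T := by
    linarith [hR.antitoneOn ⟨le_rfl, by linarith⟩ hδ2 (by linarith : 0 ≤ δ / 2),
      hR hδ' ⟨by linarith, le_rfl⟩ hδT]
  have hD : R 0 - R T ≠ 0 := by linarith
  refine ⟨by rw [hc]; exact div_pos (by linarith) (by linarith),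
    by rw [hc, div_lt_iff₀ (by linarith)]; linarith, ?_⟩
  rintro γ ⟨hγ0, hγc⟩ t ht
  refine max_sub_add_half_sub_le_of_antitoneOn hR.antitoneOn ⟨hδ0, hδT⟩ hγ0.le ?_ ht
  calc γ * (R 0 - R T) < c * (R 0 - R T) := mul_lt_mul_of_pos_right hγc (by linarith)
    _ = (R (δ / 2) - R δ) / 2 := by rw [hc]; field_simp

end AntitoneTail

theorem escape_rate_lower_bound_general
    (T κ δ : ℝ) (hδ : δ ∈ Set.Ioo 0 T)
    (η w r : ℝ → ℝ)
    (hη : ∀ t ∈ Set.Icc (0:ℝ) T,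
      HasDerivWithinAt η (η t ^ 2 - 2 * κ * η t - 1) (Set.Icc (0:ℝ) T) t)
    (hw : ∀ t, w t = Real.exp (∫ s in t..T, (-κ + η s)))
    (hr : ∀ t, r t = ∫ s in t..T, ((w s) ^ 2)⁻¹)
    (cδ : ℝ)
    (hcδ : cδ = (∫ s in (δ/2)..δ, ((w s) ^ 2)⁻¹) / (2 * ∫ s in (0:ℝ)..T, ((w s) ^ 2)⁻¹)) :
    0 < cδ ∧ cδ < 1 / 2 ∧
    ∀ γ ∈ Set.Ioo (0:ℝ) cδ, ∀ t ∈ Set.Icc (δ/2) T,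
      max (r δ - r t) 0 + 1 / 2 * (r (δ/2) - r (min t δ)) ≤
        (1 - γ) * ∫ s in (δ/2)..t, ((w s) ^ 2)⁻¹ := by
  obtain ⟨hδ0, hδT⟩ := hδ
  have hw_pos : ∀ s, 0 < w s := fun s => hw s ▸ Real.exp_pos _
  have hw_cont : ContinuousOn w (Icc 0 T) :=
    ((continuousOn_intervalIntegral_left (by linarith)
      (continuousOn_const.add fun t ht => (hη t ht).continuousWithinAt)).rexp).congr
      fun t _ => hw t
  have hf_int : IntegrableOn (fun s => ((w s) ^ 2)⁻¹) (Icc 0 T) :=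
    ((hw_cont.pow 2).inv₀ fun s _ => (pow_pos (hw_pos s) 2).ne').integrableOn_Icc
  have hr_eq : r = fun t => ∫ s in t..T, ((w s) ^ 2)⁻¹ := funext hr
  have hr_anti : StrictAntiOn r (Icc 0 T) :=
    hr_eq ▸ strictAntiOn_intervalIntegral_left hf_int fun s _ => by have := hw_pos s; positivity
  have hr_sub : ∀ {x y}, x ∈ Icc 0 T → y ∈ Icc 0 T →
      ∫ s in x..y, ((w s) ^ 2)⁻¹ = r x - r y := fun hx hy => by
    rw [hr_eq, intervalIntegral_left_sub_left hf_int hx hy]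
  have hδ2 : δ / 2 ∈ Icc 0 T := ⟨by linarith, by linarith⟩
  rw [hr_sub hδ2 ⟨hδ0.le, hδT.le⟩, hr_sub (left_mem_Icc.2 (by linarith))
    (right_mem_Icc.2 (by linarith))] at hcδ
  obtain ⟨hc_pos, hc_half, hbound⟩ :=
    escape_rate_bound_of_strictAntiOn hr_anti ⟨hδ0, hδT⟩ hcδ
  refine ⟨hc_pos, hc_half, fun γ hγ t ht => ?_⟩
  rw [hr_sub hδ2 ⟨by linarith [ht.1], ht.2⟩]
  exact hbound γ hγ t ht

/-- With `c_δ := (∫_{δ/2}^δ w_r⁻² dr)/(2∫_0^T w_r⁻² dr)` one has `0 < c_δ < 1/2`, and for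
every `γ ∈ (0, c_δ)` and `t ∈ [δ/2, T]`:
`(1−γ)·∫_{δ/2}^t w_s⁻² ds ≥ max(r_δ − r_t, 0) + (1/2)·(r_{δ/2} − r_{min(t,δ)})`. -/
theorem escape_rate_lower_bound
    (T κ δ : ℝ) (hT : 0 < T) (hδ : δ ∈ Set.Ioo 0 T)
    (η w r : ℝ → ℝ)
    (hη : ∀ t ∈ Set.Icc (0:ℝ) T,
      HasDerivWithinAt η (η t ^ 2 - 2 * κ * η t - 1) (Set.Icc (0:ℝ) T) t)
    (hηT : η T = 1)
    (hw : ∀ t, w t = Real.exp (∫ s in t..T, (-κ + η s)))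
    (hr : ∀ t, r t = ∫ s in t..T, ((w s) ^ 2)⁻¹)
    (hrδ : 0 < r δ)
    (cδ : ℝ)
    (hcδ : cδ = (∫ s in (δ/2)..δ, ((w s) ^ 2)⁻¹) / (2 * ∫ s in (0:ℝ)..T, ((w s) ^ 2)⁻¹)) :
    0 < cδ ∧ cδ < 1 / 2 ∧
    ∀ γ ∈ Set.Ioo (0:ℝ) cδ, ∀ t ∈ Set.Icc (δ/2) T,
      max (r δ - r t) 0 + 1 / 2 * (r (δ/2) - r (min t δ)) ≤
        (1 - γ) * ∫ s in (δ/2)..t, ((w s) ^ 2)⁻¹ :=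
  escape_rate_lower_bound_general T κ δ hδ η w r hη hw hr cδ hcδ
end
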